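/- arXiv:1903.05189 — 10 statements merged into one kernel-verified Lean document; each statement's English description precedes it below -/
import Mathlib

section
/- Let 0 ≤ a < b < ∞, let V : ℝ → ℝ be continuous on [a,b] and twice differentiable on (a,b), and suppose (−LV)(S) ≤ 0 for all S ∈ (a,b). Then sup_{S ∈ [a,b]} V(S) ≤ max{max(V(a),0), max(V(b),0)}, i.e. the supremum of V over [a,b] is bounded by the supremum of the positive part of V over the boundary points a and b. -/
open Topology Filter


/-- The Black–Scholes ordinary differential operator `(−LV)(S)`,
expressed via explicitly given first and second derivative functions. -/
noncomputable def negL (r q σ : ℝ) (V V' V'' : ℝ → ℝ) (S : ℝ) : ℝ :=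
  -(σ ^ 2 / 2) * S ^ 2 * V'' S - (r - q) * S * V' S + r * V S

/-- If `V` is continuous on `[a,b]`, twice differentiable on `(a,b)` and `−LV ≤ 0` there,
then the supremum of `V` on `[a,b]` is bounded by the supremum of the positive part of `V`
over the boundary points `a`, `b`. -/
theorem max_principle_BSOD_le
    (r q σ : ℝ) (hr : 0 < r) (a b : ℝ) (ha : 0 ≤ a) (hab : a < b)
    (V V' V'' : ℝ → ℝ)
    (hC : ContinuousOn V (Set.Icc a b))
    (hV' : ∀ S ∈ Set.Ioo a b, HasDerivAt V (V' S) S)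
    (hV'' : ∀ S ∈ Set.Ioo a b, HasDerivAt V' (V'' S) S)
    (hL : ∀ S ∈ Set.Ioo a b, negL r q σ V V' V'' S ≤ 0) :
    ∀ S ∈ Set.Icc a b, V S ≤ max (max (V a) 0) (max (V b) 0) := by
  intro S hS
  set M := max (max (V a) 0) (max (V b) 0) with hM
  have hMa : V a ≤ M := le_max_of_le_left (le_max_left _ _)
  have hMb : V b ≤ M := le_max_of_le_right (le_max_left _ _)
  have hM0 : (0:ℝ) ≤ M := le_max_of_le_left (le_max_right _ _)
  by_contra hlt
  push_neg at hlt
  obtain ⟨x, hx, hmax⟩ := isCompact_Icc.exists_isMaxOn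
    (Set.nonempty_Icc.2 hab.le) hC
  have hMx : M < V x := lt_of_lt_of_le hlt (hmax hS)
  have hxa : x ≠ a := by rintro rfl; exact absurd hMx (not_lt.2 hMa)
  have hxb : x ≠ b := by rintro rfl; exact absurd hMx (not_lt.2 hMb)
  have hxI : x ∈ Set.Ioo a b := ⟨lt_of_le_of_ne hx.1 (Ne.symm hxa), lt_of_le_of_ne hx.2 hxb⟩
  have hlocal : IsLocalMax V x := hmax.isLocalMax (Icc_mem_nhds hxI.1 hxI.2)
  have hd0 : V' x = 0 := hlocal.hasDerivAt_eq_zero (hV' x hxI)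
  have hVx_pos : 0 < V x := lt_of_le_of_lt hM0 hMx
  have h2 : V'' x ≤ 0 := by
    by_contra h
    push_neg at h
    have hslope : Filter.Tendsto (slope V' x) (𝓝[≠] x) (𝓝 (V'' x)) :=
      hasDerivAt_iff_tendsto_slope.1 (hV'' x hxI)
    have hslope' : Filter.Tendsto (slope V' x) (𝓝[>] x) (𝓝 (V'' x)) :=
      hslope.mono_left (nhdsWithin_mono x fun y hy => ne_of_gt hy)
    have hev : ∀ᶠ y in 𝓝[>] x, 0 < slope V' x y :=
      hslope'.eventually (eventually_gt_nhds h)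
    have hIoo : Set.Ioo x b ∈ 𝓝[>] x := Ioo_mem_nhdsGT_of_mem ⟨le_refl x, hxI.2⟩
    obtain ⟨u, hu, hsub⟩ := mem_nhdsGT_iff_exists_Ioo_subset.1 (hev.and hIoo)
    set c := (x + min u b) / 2 with hc
    have hxu : x < min u b := lt_min hu hxI.2
    have hxc : x < c := by simp only [hc]; linarith
    have hcu : c < min u b := by simp only [hc]; linarith
    have hcb : c < b := lt_of_lt_of_le hcu (min_le_right _ _)
    have hcIcc : Set.Icc x c ⊆ Set.Icc a b :=
      Set.Icc_subset_Icc hxI.1.le hcb.le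
    have hmono : StrictMonoOn V (Set.Icc x c) := by
      apply strictMonoOn_of_deriv_pos (convex_Icc x c) (hC.mono hcIcc)
      intro y hy
      rw [interior_Icc] at hy
      have hyab : y ∈ Set.Ioo a b := ⟨hxI.1.trans hy.1, hy.2.trans hcb⟩
      rw [(hV' y hyab).deriv]
      have hyu : y ∈ Set.Ioo x u :=
        ⟨hy.1, hy.2.trans (hcu.trans_le (min_le_left _ _))⟩
      have := (hsub hyu).1
      rw [slope_def_field, hd0, sub_zero, div_pos_iff] at this
      rcases this with ⟨h1, _⟩ | ⟨_, h2'⟩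
      · exact h1
      · linarith [hy.1, h2']
    have : V x < V c := hmono (Set.left_mem_Icc.2 hxc.le) (Set.right_mem_Icc.2 hxc.le) hxc
    exact absurd this (not_lt.2 (hmax ⟨hxI.1.le.trans hxc.le, hcb.le⟩))
  have hx0 : 0 < x := lt_of_le_of_lt ha hxI.1
  have key := hL x hxI
  unfold negL at key
  rw [hd0] at key
  nlinarith [mul_nonneg (mul_nonneg (by positivity : (0:ℝ) ≤ σ ^ 2 / 2) (sq_nonneg x))
    (neg_nonneg.2 h2), mul_pos hr hVx_pos]
end

section
/- Suppose V : (0,∞) → ℝ is twice differentiable, V(S) > 0 for all S > 0, and V solves the perpetual American put variational inequality. If S₀ > 0 satisfies V(S₀) = max(E−S₀, 0) (i.e. S₀ lies in the stopping region), then S₀ ≤ E and q·S₀ ≤ r·E; in particular the optimal exercise boundary cannot exceed min{rE/q, E} when q > 0. -/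
/-!
In the stopping region `V` touches the payoff, so `V > 0` forces the payoff to be `E - S₀ > 0`,
i.e. `S₀ < E`. There the contact function `V S - (E - S)` attains its minimum `0`, which forces
smooth fit `V'(S₀) = -1` and convexity `V''(S₀) ≥ 0`. Substituting into `(−LV)(S₀) ≥ 0` leaves
`r E - q S₀ ≥ (σ²/2) S₀² V''(S₀) ≥ 0`.
-/

open Filter Topology

theorem IsLocalMin.nonneg_of_hasDerivAt_of_hasDerivAt {f f' : ℝ → ℝ} {x f'' : ℝ}
    (hmin : IsLocalMin f x) (hf : ∀ᶠ y in 𝓝 x, HasDerivAt f (f' y) y)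
    (hf' : HasDerivAt f' f'' x) : 0 ≤ f'' := by
  by_contra! hneg
  have hderiv : deriv f =ᶠ[𝓝 x] f' := hf.mono fun y hy => hy.deriv
  have hderiv₂ : deriv (deriv f) x = f'' := hderiv.deriv_eq.trans hf'.deriv
  have hcrit : deriv f x = 0 := hderiv.eq_of_nhds.trans (hmin.hasDerivAt_eq_zero hf.self_of_nhds)
  -- The second-derivative test makes `x` a local maximum too, so `f` is locally constant.
  have hmax : IsLocalMax f x := isLocalMax_of_deriv_deriv_neg (hderiv₂ ▸ hneg) hcrit
    hf.self_of_nhds.continuousAt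
  have hconst : f =ᶠ[𝓝 x] fun _ => f x := by
    filter_upwards [hmin, hmax] with y hy₁ hy₂ using le_antisymm hy₂ hy₁
  have : deriv (deriv f) x = 0 := by
    rw [hconst.deriv.deriv_eq]
    simp
  linarith

theorem deriv_eq_neg_one_and_nonneg_of_touches_payoff {E S₀ : ℝ} {V V' V'' : ℝ → ℝ}
    (hV' : ∀ S : ℝ, 0 < S → HasDerivAt V (V' S) S)
    (hV'' : ∀ S : ℝ, 0 < S → HasDerivAt V' (V'' S) S)
    (hobs : ∀ S : ℝ, 0 < S → E - S ≤ V S) (hS₀ : 0 < S₀) (hcontact : V S₀ = E - S₀) :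
    V' S₀ = -1 ∧ 0 ≤ V'' S₀ := by
  have hmin : IsLocalMin (fun S => V S - (E - S)) S₀ := by
    filter_upwards [Ioi_mem_nhds hS₀] with S hS
    linarith [hobs S hS]
  have hderiv : ∀ᶠ S in 𝓝 S₀, HasDerivAt (fun S => V S - (E - S)) (V' S + 1) S := by
    filter_upwards [Ioi_mem_nhds hS₀] with S hS
    exact ((hV' S hS).sub ((hasDerivAt_id S).const_sub E)).congr_deriv (by ring)
  refine ⟨?_, hmin.nonneg_of_hasDerivAt_of_hasDerivAt hderiv ((hV'' S₀ hS₀).add_const 1)⟩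
  linarith [hmin.hasDerivAt_eq_zero hderiv.self_of_nhds]

theorem stopping_region_bound_general
    (r q σ E : ℝ)
    (V V' V'' : ℝ → ℝ)
    (hV' : ∀ S : ℝ, 0 < S → HasDerivAt V (V' S) S)
    (hV'' : ∀ S : ℝ, 0 < S → HasDerivAt V' (V'' S) S)
    (hpos : ∀ S : ℝ, 0 < S → 0 < V S)
    (hVI : ∀ S : ℝ, 0 < S →
      min (negL r q σ V V' V'' S) (V S - max (E - S) 0) = 0)
    (S₀ : ℝ) (hS₀ : 0 < S₀) (hstop : V S₀ = max (E - S₀) 0) :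
    S₀ ≤ E ∧ q * S₀ ≤ r * E := by
  have hVI' : ∀ S : ℝ, 0 < S → 0 ≤ negL r q σ V V' V'' S ∧ 0 ≤ V S - max (E - S) 0 :=
    fun S hS => le_min_iff.1 (hVI S hS).ge
  have hobs : ∀ S : ℝ, 0 < S → E - S ≤ V S := fun S hS =>
    (le_max_left _ _).trans (sub_nonneg.1 (hVI' S hS).2)
  have hES : S₀ < E := by
    by_contra! h
    linarith [hpos S₀ hS₀, hstop.trans (max_eq_right (sub_nonpos.2 h))]
  have hcontact : V S₀ = E - S₀ := hstop.trans (max_eq_left (sub_pos.2 hES).le)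
  obtain ⟨hfit, hconvex⟩ :=
    deriv_eq_neg_one_and_nonneg_of_touches_payoff hV' hV'' hobs hS₀ hcontact
  have hL := (hVI' S₀ hS₀).1
  rw [negL, hfit, hcontact] at hL
  have : 0 ≤ σ ^ 2 / 2 * S₀ ^ 2 * V'' S₀ := by positivity
  exact ⟨hES.le, by linarith⟩

/-- If `S₀` lies in the stopping region of a positive solution `V` of the perpetual
American put variational inequality, then `S₀ ≤ E` and `q·S₀ ≤ r·E`: the optimal exercise
boundary cannot exceed `min{rE/q, E}`. -/
theorem stopping_region_bound
    (r q σ E : ℝ) (hr : 0 < r) (hq : 0 ≤ q) (hσ : 0 < σ) (hE : 0 < E)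
    (V V' V'' : ℝ → ℝ)
    (hV' : ∀ S : ℝ, 0 < S → HasDerivAt V (V' S) S)
    (hV'' : ∀ S : ℝ, 0 < S → HasDerivAt V' (V'' S) S)
    (hpos : ∀ S : ℝ, 0 < S → 0 < V S)
    (hVI : ∀ S : ℝ, 0 < S →
      min (negL r q σ V V' V'' S) (V S - max (E - S) 0) = 0)
    (S₀ : ℝ) (hS₀ : 0 < S₀) (hstop : V S₀ = max (E - S₀) 0) :
    S₀ ≤ E ∧ q * S₀ ≤ r * E :=
  stopping_region_bound_general r q σ E V V' V'' hV' hV'' hpos hVI S₀ hS₀ hstop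
end

section
/- Suppose V : (0,∞) → ℝ is twice differentiable, V(S) > 0 for all S > 0, V solves the perpetual American put variational inequality, and V(S) → E as S → 0⁺. Then: (i) if V(S₀) = max(E−S₀, 0) for some S₀ > 0, then V(S) = max(E−S, 0) = E−S for every 0 < S < S₀; (ii) if V(S₁) > max(E−S₁, 0) for some S₁ > 0, then V(S) > max(E−S, 0) for every S > S₁. -/
open Set Filter Topology

section Order

variable {α : Type*} [ConditionallyCompleteLinearOrder α] [TopologicalSpace α] [OrderTopology α]
  {s : Set α} {c d : α}

theorem IsClosed.exists_mem_forall_Ico_notMem (hs : IsClosed s) (hd : d ∈ s) (hcd : c ≤ d) :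
    ∃ b ∈ s, c ≤ b ∧ b ≤ d ∧ ∀ x ∈ Ico c b, x ∉ s := by
  have hbdd : BddBelow (s ∩ Ici c) := ⟨c, fun _ hx => hx.2⟩
  obtain ⟨hbs, hcb⟩ := (hs.inter isClosed_Ici).csInf_mem ⟨d, hd, hcd⟩ hbdd
  refine ⟨_, hbs, hcb, csInf_le hbdd ⟨hd, hcd⟩, fun x hx hxs => ?_⟩
  exact (csInf_le hbdd ⟨hxs, hx.1⟩).not_gt hx.2

theorem IsClosed.exists_mem_forall_Ioc_notMem (hs : IsClosed s) (hd : d ∈ s) (hdc : d ≤ c) :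
    ∃ a ∈ s, d ≤ a ∧ a ≤ c ∧ ∀ x ∈ Ioc a c, x ∉ s := by
  have hbdd : BddAbove (s ∩ Iic c) := ⟨c, fun _ hx => hx.2⟩
  obtain ⟨has, hac⟩ := (hs.inter isClosed_Iic).csSup_mem ⟨d, hd, hdc⟩ hbdd
  refine ⟨_, has, le_csSup hbdd ⟨hd, hdc⟩, hac, fun x hx hxs => ?_⟩
  exact (le_csSup hbdd ⟨hxs, hx.2⟩).not_gt hx.1

end Order

theorem HasDerivAt.eq_of_eventually_le_of_eq {f g : ℝ → ℝ} {f' g' p : ℝ} (hf : HasDerivAt f f' p)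
    (hg : HasDerivAt g g' p) (hle : ∀ᶠ x in 𝓝 p, g x ≤ f x) (heq : f p = g p) : f' = g' := by
  have hmin : IsLocalMin (fun x => f x - g x) p :=
    hle.mono fun x hx => by simp only [heq, sub_self, sub_nonneg, hx]
  linarith [hmin.hasDerivAt_eq_zero (hf.sub hg)]

theorem lt_of_hasDerivAt_nonpos_of_neg {f f' : ℝ → ℝ} {a b x₀ : ℝ}
    (hf : ∀ x ∈ Icc a b, HasDerivAt f (f' x) x) (hle : ∀ x ∈ Ioo a b, f' x ≤ 0)
    (hx₀ : x₀ ∈ Ioo a b) (hlt : f' x₀ < 0) : f b < f a := by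
  have hab : a ≤ b := (hx₀.1.trans hx₀.2).le
  have hanti : AntitoneOn f (Icc a b) := by
    refine antitoneOn_of_deriv_nonpos (convex_Icc a b)
      (fun x hx => (hf x hx).continuousAt.continuousWithinAt)
      (fun x hx => (hf x (interior_subset hx)).differentiableAt.differentiableWithinAt)
      (fun x hx => ?_)
    rw [interior_Icc] at hx
    rw [(hf x (Ioo_subset_Icc_self hx)).deriv]
    exact hle x hx
  refine (hanti (left_mem_Icc.2 hab) (right_mem_Icc.2 hab) hab).lt_of_ne fun hba => hlt.ne ?_
  have hconst : ∀ x ∈ Icc a b, f x = f a := fun x hx =>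
    le_antisymm (hanti (left_mem_Icc.2 hab) hx hx.1)
      (hba ▸ hanti hx (right_mem_Icc.2 hab) hx.2)
  have hloc : f =ᶠ[𝓝 x₀] fun _ => f a :=
    eventually_of_mem (Icc_mem_nhds hx₀.1 hx₀.2) hconst
  exact (hf x₀ (Ioo_subset_Icc_self hx₀)).unique
    ((hasDerivAt_const x₀ (f a)).congr_of_eventuallyEq hloc)

theorem sub_mul_rpow_sub_rpow_neg {x z e : ℝ} (hx : 0 < x) (hz : 0 < z) (he : 0 < e)
    (hxz : x ≠ z) : (z - x) * (x ^ e - z ^ e) < 0 := by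
  rcases hxz.lt_or_gt with h | h
  · exact mul_neg_of_pos_of_neg (sub_pos.2 h) (sub_neg.2 (Real.rpow_lt_rpow hx.le h he))
  · exact mul_neg_of_neg_of_pos (sub_neg.2 h) (sub_pos.2 (Real.rpow_lt_rpow hz.le h he))

/-- Vieta's relations for the roots `μ, ν` of the indicial equation
`σ²/2 λ(λ - 1) + (r - q) λ - r = 0`, i.e. for the solutions `S ^ μ`, `S ^ ν` of `−LV = 0`. -/
def AreIndicialRoots (r q σ μ ν : ℝ) : Prop :=
  σ ^ 2 / 2 * (μ * ν) = -r ∧ σ ^ 2 / 2 * (μ + ν) = σ ^ 2 / 2 - (r - q)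

theorem AreIndicialRoots.symm {r q σ μ ν : ℝ} (h : AreIndicialRoots r q σ μ ν) :
    AreIndicialRoots r q σ ν μ :=
  ⟨by rw [mul_comm ν, h.1], by rw [add_comm ν, h.2]⟩

theorem exists_areIndicialRoots {r σ : ℝ} (q : ℝ) (hr : 0 < r) (hσ : 0 < σ) :
    ∃ μ ν, ν < 0 ∧ 0 < μ ∧ AreIndicialRoots r q σ μ ν := by
  unfold AreIndicialRoots
  have hs : 0 < σ ^ 2 / 2 := by positivity
  generalize σ ^ 2 / 2 = s at hs ⊢
  have hΔ : 0 < (r - q - s) ^ 2 + 4 * s * r := by positivity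
  obtain ⟨d, hd0, hd⟩ : ∃ d : ℝ, 0 < d ∧ d ^ 2 = (r - q - s) ^ 2 + 4 * s * r :=
    ⟨_, Real.sqrt_pos.2 hΔ, Real.sq_sqrt hΔ.le⟩
  refine ⟨(-(r - q - s) + d) / (2 * s), (-(r - q - s) - d) / (2 * s), ?_⟩
  obtain ⟨hprod, hsum⟩ : s * ((-(r - q - s) + d) / (2 * s) * ((-(r - q - s) - d) / (2 * s))) = -r ∧
      s * ((-(r - q - s) + d) / (2 * s) + (-(r - q - s) - d) / (2 * s)) = s - (r - q) := by
    constructor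
    · field_simp
      linear_combination -hd
    · field_simp
      ring
  have hlt : (-(r - q - s) - d) / (2 * s) < (-(r - q - s) + d) / (2 * s) := by
    gcongr; linarith
  generalize (-(r - q - s) + d) / (2 * s) = μ at *
  generalize (-(r - q - s) - d) / (2 * s) = ν at *
  have hμν : μ * ν < 0 := by nlinarith
  exact ⟨by nlinarith, by nlinarith, hprod, hsum⟩

/-- The coefficient `A` of `S ^ μ` in the solution `A S ^ μ + B S ^ ν` of `−LV = 0` that matches
`f` to first order at `S` (variation of parameters); `B` is `variationCoeff ν μ f f' S`. -/
noncomputable def variationCoeff (μ ν : ℝ) (f f' : ℝ → ℝ) (S : ℝ) : ℝ :=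
  S ^ (-μ) * (ν * f S - S * f' S) / (ν - μ)

theorem variationCoeff_mul_rpow_add {μ ν : ℝ} (hne : μ ≠ ν) (f f' : ℝ → ℝ) {S : ℝ} (hS : 0 < S) :
    variationCoeff μ ν f f' S * S ^ μ + variationCoeff ν μ f f' S * S ^ ν = f S := by
  have hμ : S ^ (-μ) * S ^ μ = 1 := by rw [← Real.rpow_add hS]; simp
  have hν : S ^ (-ν) * S ^ ν = 1 := by rw [← Real.rpow_add hS]; simp
  have hne' : ν - μ ≠ 0 := sub_ne_zero.2 hne.symm
  have hne'' : μ - ν ≠ 0 := sub_ne_zero.2 hne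
  unfold variationCoeff
  field_simp
  linear_combination (μ - ν) * (ν * f S - S * f' S) * hμ - (μ - ν) * (μ * f S - S * f' S) * hν

section VariationCoeff

variable {r q σ μ ν : ℝ} {f f' f'' : ℝ → ℝ}

theorem hasDerivAt_variationCoeff (hroots : AreIndicialRoots r q σ μ ν) (hσ : σ ≠ 0)
    (hne : μ ≠ ν) {S : ℝ} (hS : 0 < S) (hf : HasDerivAt f (f' S) S)
    (hf' : HasDerivAt f' (f'' S) S) :
    HasDerivAt (variationCoeff μ ν f f')
      (S ^ (-μ - 1) * negL r q σ f f' f'' S / (σ ^ 2 / 2 * (ν - μ))) S := by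
  have hpow : HasDerivAt (fun x : ℝ => x ^ (-μ)) (-μ * S ^ (-μ - 1)) S :=
    Real.hasDerivAt_rpow_const (Or.inl hS.ne')
  have hW : HasDerivAt (fun x => ν * f x - x * f' x) (ν * f' S - (1 * f' S + S * f'' S)) S :=
    (hf.const_mul ν).sub ((hasDerivAt_id S).mul hf')
  refine ((hpow.mul hW).div_const (ν - μ)).congr_deriv ?_
  have hSμ : S ^ (-μ) = S ^ (-μ - 1) * S := by
    rw [Real.rpow_sub hS, Real.rpow_one, div_mul_cancel₀ _ hS.ne']
  have hne' : ν - μ ≠ 0 := sub_ne_zero.2 hne.symm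
  rw [hSμ, negL]
  field_simp
  linear_combination (-2 * f S) * hroots.1 + (2 * S * f' S) * hroots.2

theorem variationCoeff_eq_of_negL_eq_zero (hroots : AreIndicialRoots r q σ μ ν) (hσ : σ ≠ 0)
    (hne : μ ≠ ν) (hf : ∀ S, 0 < S → HasDerivAt f (f' S) S)
    (hf' : ∀ S, 0 < S → HasDerivAt f' (f'' S) S) {x y : ℝ} (hx : 0 < x) (hxy : x ≤ y)
    (h0 : ∀ S ∈ Ioo x y, negL r q σ f f' f'' S = 0) :
    variationCoeff μ ν f f' x = variationCoeff μ ν f f' y := by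
  have hderiv : ∀ S, 0 < S → HasDerivAt (variationCoeff μ ν f f') _ S := fun S hS =>
    hasDerivAt_variationCoeff hroots hσ hne hS (hf S hS) (hf' S hS)
  rcases hxy.eq_or_lt with rfl | hxy
  · rfl
  obtain ⟨S, hS, hslope⟩ := exists_hasDerivAt_eq_slope _ _ hxy
    (fun S hS => (hderiv S (hx.trans_le hS.1)).continuousAt.continuousWithinAt)
    (fun S hS => hderiv S (hx.trans hS.1))
  rw [h0 S hS, mul_zero, zero_div, eq_comm, div_eq_zero_iff, sub_eq_zero] at hslope
  exact (hslope.resolve_right (sub_pos.2 hxy).ne').symm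

end VariationCoeff

theorem negL_payoff (r q σ E S : ℝ) :
    negL r q σ (fun x => E - x) (fun _ => -1) (fun _ => 0) S = r * E - q * S := by
  simp only [negL]
  ring

theorem hasDerivAt_variationCoeff_payoff_add_mul {r q σ μ ν : ℝ}
    (hroots : AreIndicialRoots r q σ μ ν) (hσ : σ ≠ 0) (hne : μ ≠ ν) (E c : ℝ) {x : ℝ}
    (hx : 0 < x) :
    HasDerivAt (fun x => variationCoeff ν μ (fun x => E - x) (fun _ => -1) x +
        c * variationCoeff μ ν (fun x => E - x) (fun _ => -1) x)
      (x ^ (-μ - 1) * ((r * E - q * x) * (x ^ (μ - ν) - c)) / (σ ^ 2 / 2 * (μ - ν))) x := by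
  have hP : HasDerivAt (fun x => E - x) (-1) x := (hasDerivAt_id x).const_sub E
  have hP' : HasDerivAt (fun _ : ℝ => (-1 : ℝ)) 0 x := hasDerivAt_const x _
  have hA := hasDerivAt_variationCoeff (f'' := fun _ => 0) hroots hσ hne hx hP hP'
  have hB := hasDerivAt_variationCoeff (f'' := fun _ => 0) hroots.symm hσ hne.symm hx hP hP'
  rw [negL_payoff] at hA hB
  refine (hB.add (hA.const_mul c)).congr_deriv ?_
  have hpow : x ^ (-ν - 1) = x ^ (-μ - 1) * x ^ (μ - ν) := by
    rw [← Real.rpow_add hx]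
    ring_nf
  have hne' : μ - ν ≠ 0 := sub_ne_zero.2 hne
  have hne'' : ν - μ ≠ 0 := sub_ne_zero.2 hne.symm
  rw [hpow]
  field_simp
  ring

/-- The two coefficients of the payoff `E - S` cannot both take equal values at two points: a
combination `B + c A` of them is strictly decreasing, with `c = b ^ (μ - ν)` if `q ≤ 0` and
`c = (r E / q) ^ (μ - ν)`, from the sign change of the forcing `r E - q S`, if `q > 0`. -/
theorem not_variationCoeff_payoff_eq_and_eq {r q σ μ ν E a b : ℝ}
    (hroots : AreIndicialRoots r q σ μ ν) (hσ : σ ≠ 0) (hr : 0 < r) (hE : 0 < E) (hνμ : ν < μ)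
    (ha : 0 < a) (hab : a < b) :
    ¬ (variationCoeff μ ν (fun x => E - x) (fun _ => -1) a =
          variationCoeff μ ν (fun x => E - x) (fun _ => -1) b ∧
        variationCoeff ν μ (fun x => E - x) (fun _ => -1) a =
          variationCoeff ν μ (fun x => E - x) (fun _ => -1) b) := by
  rintro ⟨hA, hB⟩
  have hK := hasDerivAt_variationCoeff_payoff_add_mul hroots hσ hνμ.ne' E
  set e := μ - ν
  have he : 0 < e := sub_pos.2 hνμ
  have hs : 0 < σ ^ 2 / 2 * e := by positivity
  suffices ∃ c, (∀ x ∈ Ioo a b, (r * E - q * x) * (x ^ e - c) ≤ 0) ∧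
      ∃ x₀ ∈ Ioo a b, (r * E - q * x₀) * (x₀ ^ e - c) < 0 by
    obtain ⟨c, hle, x₀, hx₀, hlt⟩ := this
    have hdec := lt_of_hasDerivAt_nonpos_of_neg (fun x hx => hK c (ha.trans_le hx.1))
      (fun x hx => div_nonpos_of_nonpos_of_nonneg
        (mul_nonpos_of_nonneg_of_nonpos (Real.rpow_pos_of_pos (ha.trans hx.1) _).le (hle x hx))
        hs.le)
      hx₀ (div_neg_of_neg_of_pos (mul_neg_of_pos_of_neg (Real.rpow_pos_of_pos (ha.trans hx₀.1) _)
        hlt) hs)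
    simp only [hA, hB, lt_irrefl] at hdec
  obtain ⟨x₀, hx₀, hx₀z⟩ : ∃ x₀ ∈ Ioo a b, x₀ ≠ r * E / q :=
    ((Ioo_infinite hab).sdiff (finite_singleton _)).nonempty
  rcases le_or_gt q 0 with hq | hq
  · have hneg : ∀ x ∈ Ioo a b, (r * E - q * x) * (x ^ e - b ^ e) < 0 := fun x hx =>
      mul_neg_of_pos_of_neg (by nlinarith [ha.trans hx.1, mul_pos hr hE])
        (sub_neg.2 (Real.rpow_lt_rpow (ha.trans hx.1).le hx.2 he))
    exact ⟨b ^ e, fun x hx => (hneg x hx).le, x₀, hx₀, hneg x₀ hx₀⟩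
  · set z := r * E / q
    have hz : 0 < z := by positivity
    have hforce : ∀ x, r * E - q * x = q * (z - x) := fun x => by
      simp only [z]; field_simp
    refine ⟨z ^ e, fun x hx => ?_, x₀, hx₀, ?_⟩
    · rw [hforce, mul_assoc]
      rcases eq_or_ne x z with rfl | hxz
      · simp
      · exact mul_nonpos_of_nonneg_of_nonpos hq.le
          (sub_mul_rpow_sub_rpow_neg (ha.trans hx.1) hz he hxz).le
    · rw [hforce, mul_assoc]
      exact mul_neg_of_pos_of_neg hq (sub_mul_rpow_sub_rpow_neg (ha.trans hx₀.1) hz he hx₀z)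

section Solution

variable {r q σ E : ℝ} {V V' V'' : ℝ → ℝ}

theorem not_forall_negL_eq_zero_of_tangent_payoff (hr : 0 < r) (hσ : 0 < σ) (hE : 0 < E)
    (hV' : ∀ S, 0 < S → HasDerivAt V (V' S) S) (hV'' : ∀ S, 0 < S → HasDerivAt V' (V'' S) S)
    {a b : ℝ} (ha : 0 < a) (hab : a < b) (hVa : V a = E - a) (hVb : V b = E - b)
    (hV'a : V' a = -1) (hV'b : V' b = -1) :
    ¬ ∀ S ∈ Ioo a b, negL r q σ V V' V'' S = 0 := by
  intro h0
  obtain ⟨μ, ν, hν, hμ, hroots⟩ := exists_areIndicialRoots q hr hσ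
  have hcoeff : ∀ {μ ν}, AreIndicialRoots r q σ μ ν → μ ≠ ν →
      variationCoeff μ ν (fun x => E - x) (fun _ => -1) a =
        variationCoeff μ ν (fun x => E - x) (fun _ => -1) b := by
    intro μ ν hroots hne
    have hV := variationCoeff_eq_of_negL_eq_zero hroots hσ.ne' hne hV' hV'' ha hab.le h0
    simpa only [variationCoeff, hVa, hVb, hV'a, hV'b] using hV
  exact not_variationCoeff_payoff_eq_and_eq hroots hσ.ne' hr hE (hν.trans hμ) ha hab
    ⟨hcoeff hroots (hν.trans hμ).ne', hcoeff hroots.symm (hν.trans hμ).ne⟩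

/-- On `(0, b)` a solution of `−LV = 0` is `A S ^ μ + B S ^ ν` with `ν < 0 < μ`; its limit at `0⁺`
can only be finite if `B = 0`, and then it is `0`. -/
theorem not_tendsto_nhdsGT_zero_of_negL_eq_zero (hr : 0 < r) (hσ : 0 < σ) (hE : E ≠ 0)
    (hV' : ∀ S, 0 < S → HasDerivAt V (V' S) S) (hV'' : ∀ S, 0 < S → HasDerivAt V' (V'' S) S)
    {b : ℝ} (hb : 0 < b) (h0 : ∀ S ∈ Ioo 0 b, negL r q σ V V' V'' S = 0) :
    ¬ Tendsto V (𝓝[>] 0) (𝓝 E) := by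
  intro hlim
  obtain ⟨μ, ν, hν, hμ, hroots⟩ := exists_areIndicialRoots q hr hσ
  have hc : 0 < b / 2 := half_pos hb
  set A := variationCoeff μ ν V V' (b / 2)
  set B := variationCoeff ν μ V V' (b / 2)
  have hrepr : ∀ x ∈ Ioc 0 (b / 2), V x = A * x ^ μ + B * x ^ ν := by
    rintro x ⟨hx, hxc⟩
    have h0' : ∀ S ∈ Ioo x (b / 2), negL r q σ V V' V'' S = 0 := fun S hS =>
      h0 S ⟨hx.trans hS.1, hS.2.trans (half_lt_self hb)⟩
    rw [← variationCoeff_mul_rpow_add (hν.trans hμ).ne' V V' hx,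
      variationCoeff_eq_of_negL_eq_zero hroots hσ.ne' (hν.trans hμ).ne' hV' hV'' hx hxc h0',
      variationCoeff_eq_of_negL_eq_zero hroots.symm hσ.ne' (hν.trans hμ).ne hV' hV'' hx hxc h0']
  have hnear : Ioc 0 (b / 2) ∈ 𝓝[>] (0 : ℝ) := Ioc_mem_nhdsGT hc
  have hpow : ∀ κ : ℝ, 0 < κ → Tendsto (fun x : ℝ => x ^ κ) (𝓝[>] 0) (𝓝 0) := fun κ hκ => by
    simpa [Real.zero_rpow hκ.ne'] using
      (Real.continuousAt_rpow_const 0 κ (Or.inr hκ.le)).tendsto.mono_left nhdsWithin_le_nhds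
  have hB : B = 0 := by
    have hlimB := (hlim.sub ((hpow μ hμ).const_mul A)).mul (hpow (-ν) (neg_pos.2 hν))
    rw [mul_zero] at hlimB
    refine tendsto_nhds_unique (tendsto_const_nhds.congr' ?_) hlimB
    filter_upwards [hnear] with x hx
    rw [hrepr x hx, add_sub_cancel_left, mul_assoc, ← Real.rpow_add hx.1, add_neg_cancel,
      Real.rpow_zero, mul_one]
  have hlimA := (hpow μ hμ).const_mul A
  rw [mul_zero] at hlimA
  refine hE (tendsto_nhds_unique hlim (hlimA.congr' ?_))
  filter_upwards [hnear] with x hx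
  rw [hrepr x hx, hB, zero_mul, add_zero]

theorem eq_payoff_of_lt_of_eq_payoff (hr : 0 < r) (hσ : 0 < σ) (hE : 0 < E)
    (hV' : ∀ S, 0 < S → HasDerivAt V (V' S) S) (hV'' : ∀ S, 0 < S → HasDerivAt V' (V'' S) S)
    (hge : ∀ S, 0 < S → E - S ≤ V S)
    (hL : ∀ S, 0 < S → S < E → E - S < V S → negL r q σ V V' V'' S = 0)
    (hlim : Tendsto V (𝓝[>] 0) (𝓝 E)) {S₀ c : ℝ} (hS₀E : S₀ ≤ E) (hVS₀ : V S₀ = E - S₀)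
    (hc : 0 < c) (hcS₀ : c < S₀) : V c = E - c := by
  by_contra hne
  set Z := {x | V x = E - x}
  have hclosed : ∀ x y, 0 < x → IsClosed (Icc x y ∩ Z) := fun x y hx =>
    ContinuousOn.preimage_isClosed_of_isClosed (f := fun x => (V x, E - x))
      (fun t ht => ((hV' t (hx.trans_le ht.1)).continuousAt.prodMk
        (continuousAt_const.sub continuousAt_id)).continuousWithinAt)
      isClosed_Icc (isClosed_eq continuous_fst continuous_snd)
  obtain ⟨b, ⟨hbI, hbZ⟩, hcb, -, hgapR⟩ :=
    (hclosed c S₀ hc).exists_mem_forall_Ico_notMem ⟨⟨hcS₀.le, le_rfl⟩, hVS₀⟩ hcS₀.le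
  have hb : 0 < b := hc.trans_le hcb
  replace hcb : c < b := hcb.lt_of_ne fun h => hne (h ▸ hbZ)
  have hL_Ioo : ∀ a, 0 ≤ a → (∀ x ∈ Ioc a c, V x ≠ E - x) →
      ∀ S ∈ Ioo a b, negL r q σ V V' V'' S = 0 := by
    intro a ha hgapL S hS
    have hS0 : 0 < S := ha.trans_lt hS.1
    refine hL S hS0 (hS.2.trans_le (hbI.2.trans hS₀E)) ((hge S hS0).lt_of_ne' ?_)
    rcases le_or_gt S c with hSc | hcS
    · exact hgapL S ⟨hS.1, hSc⟩
    · exact fun hVS => hgapR S ⟨hcS.le, hS.2⟩ ⟨⟨hcS.le, hS.2.le.trans hbI.2⟩, hVS⟩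
  by_cases hleft : ∃ x₀ ∈ Ioc 0 c, V x₀ = E - x₀
  · obtain ⟨x₀, hx₀, hVx₀⟩ := hleft
    obtain ⟨a, ⟨-, haZ⟩, hx₀a, hac, hgapL⟩ :=
      (hclosed x₀ c hx₀.1).exists_mem_forall_Ioc_notMem ⟨⟨le_rfl, hx₀.2⟩, hVx₀⟩ hx₀.2
    have ha : 0 < a := hx₀.1.trans_le hx₀a
    replace hac : a < c := hac.lt_of_ne fun h => hne (h ▸ haZ)
    -- smooth fit: `V - (E - ·) ≥ 0` has a local minimum at each contact point
    have hfit : ∀ p, 0 < p → V p = E - p → V' p = -1 := fun p hp hVp =>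
      (hV' p hp).eq_of_eventually_le_of_eq ((hasDerivAt_id p).const_sub E)
        ((eventually_gt_nhds hp).mono hge) hVp
    exact not_forall_negL_eq_zero_of_tangent_payoff hr hσ hE hV' hV'' ha (hac.trans hcb) haZ hbZ
      (hfit a ha haZ) (hfit b hb hbZ)
      (hL_Ioo a ha.le fun x hx hVx => hgapL x hx ⟨⟨hx₀a.trans hx.1.le, hx.2⟩, hVx⟩)
  · push Not at hleft
    exact not_tendsto_nhdsGT_zero_of_negL_eq_zero hr hσ hE.ne' hV' hV'' hb
      (hL_Ioo 0 le_rfl hleft) hlim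

end Solution

theorem stopping_and_continuation_regions_general
    (r q σ E : ℝ) (hr : 0 < r) (hσ : 0 < σ) (hE : 0 < E)
    (V V' V'' : ℝ → ℝ)
    (hV' : ∀ S : ℝ, 0 < S → HasDerivAt V (V' S) S)
    (hV'' : ∀ S : ℝ, 0 < S → HasDerivAt V' (V'' S) S)
    (hpos : ∀ S : ℝ, 0 < S → 0 < V S)
    (hVI : ∀ S : ℝ, 0 < S →
      min (negL r q σ V V' V'' S) (V S - max (E - S) 0) = 0)
    (hlim : Filter.Tendsto V (nhdsWithin 0 (Set.Ioi 0)) (nhds E)) :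
    (∀ S₀ : ℝ, 0 < S₀ → V S₀ = max (E - S₀) 0 →
      ∀ S : ℝ, 0 < S → S < S₀ → V S = max (E - S) 0 ∧ max (E - S) 0 = E - S) ∧
    (∀ S₁ : ℝ, 0 < S₁ → max (E - S₁) 0 < V S₁ →
      ∀ S : ℝ, S₁ < S → max (E - S) 0 < V S) := by
  have hge : ∀ S, 0 < S → max (E - S) 0 ≤ V S := fun S hS =>
    sub_nonneg.1 ((hVI S hS).symm.trans_le (min_le_right _ _))
  have hL : ∀ S, 0 < S → max (E - S) 0 < V S → negL r q σ V V' V'' S = 0 := fun S hS hlt =>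
    ((min_eq_iff.1 (hVI S hS)).resolve_right fun h => by linarith [h.1]).1
  have hlt_strike : ∀ S, 0 < S → V S = max (E - S) 0 → S < E := fun S hS hVS =>
    lt_of_not_ge fun h => (hpos S hS).ne' (hVS.trans (max_eq_right (by linarith)))
  have hstop : ∀ S₀, 0 < S₀ → V S₀ = max (E - S₀) 0 → ∀ S, 0 < S → S < S₀ → V S = E - S := by
    intro S₀ hS₀ hVS₀ S hS hSS₀
    have hS₀E := hlt_strike S₀ hS₀ hVS₀
    exact eq_payoff_of_lt_of_eq_payoff hr hσ hE hV' hV''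
      (fun S hS => (le_max_left _ _).trans (hge S hS))
      (fun S hS hSE hlt => hL S hS (by rwa [max_eq_left (by linarith)])) hlim hS₀E.le
      (by rw [hVS₀, max_eq_left (by linarith)]) hS hSS₀
  refine ⟨fun S₀ hS₀ hVS₀ S hS hSS₀ => ?_, fun S₁ hS₁ hVS₁ S hS₁S => ?_⟩
  · have hmax : max (E - S) 0 = E - S := max_eq_left (by linarith [hlt_strike S₀ hS₀ hVS₀])
    exact ⟨(hstop S₀ hS₀ hVS₀ S hS hSS₀).trans hmax.symm, hmax⟩
  · have hS : 0 < S := hS₁.trans hS₁S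
    refine (hge S hS).lt_of_ne fun hVS => hVS₁.ne ?_
    have hSE := hlt_strike S hS hVS.symm
    rw [hstop S hS hVS.symm S₁ hS₁ hS₁S, max_eq_left (by linarith)]

/-- For a positive solution `V` of the perpetual American put variational inequality with
`V(S) → E` as `S → 0⁺`: (i) if `V(S₀) = (E−S₀)⁺` for some `S₀ > 0` then
`V(S) = (E−S)⁺ = E−S` for all `0 < S < S₀`; (ii) if `V(S₁) > (E−S₁)⁺` for some `S₁ > 0`
then `V(S) > (E−S)⁺` for all `S > S₁`. -/
theorem stopping_and_continuation_regions
    (r q σ E : ℝ) (hr : 0 < r) (hq : 0 ≤ q) (hσ : 0 < σ) (hE : 0 < E)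
    (V V' V'' : ℝ → ℝ)
    (hV' : ∀ S : ℝ, 0 < S → HasDerivAt V (V' S) S)
    (hV'' : ∀ S : ℝ, 0 < S → HasDerivAt V' (V'' S) S)
    (hpos : ∀ S : ℝ, 0 < S → 0 < V S)
    (hVI : ∀ S : ℝ, 0 < S →
      min (negL r q σ V V' V'' S) (V S - max (E - S) 0) = 0)
    (hlim : Filter.Tendsto V (nhdsWithin 0 (Set.Ioi 0)) (nhds E)) :
    (∀ S₀ : ℝ, 0 < S₀ → V S₀ = max (E - S₀) 0 →
      ∀ S : ℝ, 0 < S → S < S₀ → V S = max (E - S) 0 ∧ max (E - S) 0 = E - S) ∧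
    (∀ S₁ : ℝ, 0 < S₁ → max (E - S₁) 0 < V S₁ →
      ∀ S : ℝ, S₁ < S → max (E - S) 0 < V S) :=
  stopping_and_continuation_regions_general r q σ E hr hσ hE V V' V'' hV' hV'' hpos hVI hlim
end

section
/- The perpetual American put variational inequality has at most one solution with the natural boundary behaviour: if V₁, V₂ : (0,∞) → ℝ are both twice differentiable, positive, solve the variational inequality min{(−LVᵢ)(S), Vᵢ(S) − max(E−S,0)} = 0 for all S > 0, and satisfy Vᵢ(S) → E as S → 0⁺ and Vᵢ(S) → 0 as S → +∞ (i = 1,2), then V₁(S) = V₂(S) for all S > 0. -/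
open Set Filter Topology

/-- One-sided comparison: `V₁ ≤ V₂` on `(0,∞)`. -/
lemma perpetual_put_VI_le
    (r q σ E : ℝ) (hr : 0 < r) (hσ : 0 < σ)
    (V₁ V₁' V₁'' V₂ V₂' V₂'' : ℝ → ℝ)
    (hV₁' : ∀ S : ℝ, 0 < S → HasDerivAt V₁ (V₁' S) S)
    (hV₁'' : ∀ S : ℝ, 0 < S → HasDerivAt V₁' (V₁'' S) S)
    (hV₂' : ∀ S : ℝ, 0 < S → HasDerivAt V₂ (V₂' S) S)
    (hV₂'' : ∀ S : ℝ, 0 < S → HasDerivAt V₂' (V₂'' S) S)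
    (hVI₁ : ∀ S : ℝ, 0 < S →
      min (negL r q σ V₁ V₁' V₁'' S) (V₁ S - max (E - S) 0) = 0)
    (hVI₂ : ∀ S : ℝ, 0 < S →
      min (negL r q σ V₂ V₂' V₂'' S) (V₂ S - max (E - S) 0) = 0)
    (hlim0₁ : Filter.Tendsto V₁ (nhdsWithin 0 (Set.Ioi 0)) (nhds E))
    (hlim0₂ : Filter.Tendsto V₂ (nhdsWithin 0 (Set.Ioi 0)) (nhds E))
    (hlimtop₁ : Filter.Tendsto V₁ Filter.atTop (nhds 0))
    (hlimtop₂ : Filter.Tendsto V₂ Filter.atTop (nhds 0)) :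
    ∀ S : ℝ, 0 < S → V₁ S ≤ V₂ S := by
  by_contra h
  push_neg at h
  obtain ⟨S₀, hS₀, hgt⟩ := h
  set W : ℝ → ℝ := fun s => V₁ s - V₂ s with hW
  have hc : 0 < W S₀ := sub_pos.mpr hgt
  set c := W S₀ with hcdef
  have hW0 : Tendsto W (𝓝[>] (0:ℝ)) (𝓝 0) := by
    have := hlim0₁.sub hlim0₂; simpa using this
  have hWtop : Tendsto W atTop (𝓝 0) := by
    have := hlimtop₁.sub hlimtop₂; simpa using this
  have h1 : {s : ℝ | W s < c} ∈ 𝓝[>] (0:ℝ) := hW0.eventually_lt_const hc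
  obtain ⟨u, hu, husub⟩ := mem_nhdsGT_iff_exists_Ioc_subset.mp h1
  have hu' : (0:ℝ) < u := hu
  have h2 : ∀ᶠ s in atTop, W s < c := hWtop.eventually_lt_const hc
  obtain ⟨M, hM⟩ := eventually_atTop.mp h2
  set a := min u S₀ / 2 with hadef
  have hmin : (0:ℝ) < min u S₀ := lt_min hu' hS₀
  have ha0 : 0 < a := by positivity
  have haS₀ : a ≤ S₀ := by
    have : min u S₀ ≤ S₀ := min_le_right _ _
    nlinarith
  have hWa : W a < c := husub ⟨ha0, by
    have h' : min u S₀ ≤ u := min_le_left _ _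
    nlinarith⟩
  set b := max M S₀ + 1 with hbdef
  have hS₀b : S₀ ≤ b := le_trans (le_max_right _ _) (by linarith)
  have hWb : W b < c := hM b (le_trans (le_max_left _ _) (by linarith))
  have hab : a < b := lt_of_le_of_lt haS₀ (lt_of_le_of_lt (le_max_right M S₀) (by linarith))
  have hIcc : Icc a b ⊆ Ioi (0:ℝ) := fun x hx => lt_of_lt_of_le ha0 hx.1
  have hWcont : ContinuousOn W (Icc a b) := fun x hx =>
    (((hV₁' x (hIcc hx)).sub (hV₂' x (hIcc hx))).continuousAt).continuousWithinAt
  obtain ⟨T, hTmem, hTmax⟩ :=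
    isCompact_Icc.exists_isMaxOn ⟨S₀, haS₀, hS₀b⟩ hWcont
  have hWT : c ≤ W T := hTmax ⟨haS₀, hS₀b⟩
  have hTa : a < T := lt_of_le_of_ne hTmem.1 (by rintro rfl; exact absurd hWT (not_le.mpr hWa))
  have hTb : T < b := lt_of_le_of_ne hTmem.2 (by rintro rfl; exact absurd hWT (not_le.mpr hWb))
  have hTpos : 0 < T := lt_trans ha0 hTa
  have hloc : IsLocalMax W T := hTmax.isLocalMax (Icc_mem_nhds hTa hTb)
  have hW'T : HasDerivAt W (V₁' T - V₂' T) T := (hV₁' T hTpos).sub (hV₂' T hTpos)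
  have hd0 : V₁' T - V₂' T = 0 := hloc.hasDerivAt_eq_zero hW'T
  have hvi1 := hVI₁ T hTpos
  have hvi2 := hVI₂ T hTpos
  have hB₂ : 0 ≤ V₂ T - max (E - T) 0 := by have h := min_le_right (negL r q σ V₂ V₂' V₂'' T) (V₂ T - max (E - T) 0); rwa [hvi2] at h
  have hA₂ : 0 ≤ negL r q σ V₂ V₂' V₂'' T := by have h := min_le_left (negL r q σ V₂ V₂' V₂'' T) (V₂ T - max (E - T) 0); rwa [hvi2] at h
  have hWTpos : 0 < W T := lt_of_lt_of_le hc hWT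
  have hWTdef : W T = V₁ T - V₂ T := rfl
  have hB₁ : 0 < V₁ T - max (E - T) 0 := by
    have h3 : 0 < V₁ T - V₂ T := by rw [← hWTdef]; exact hWTpos
    linarith
  have hA₁ : negL r q σ V₁ V₁' V₁'' T = 0 := by
    rcases min_eq_iff.mp hvi1 with ⟨h', _⟩ | ⟨h', h''⟩
    · exact h'
    · exfalso; rw [h'] at hB₁; exact lt_irrefl 0 hB₁
  have h3 : 0 < V₁ T - V₂ T := hWTdef ▸ hWTpos
  have hd0' : V₁' T = V₂' T := sub_eq_zero.mp hd0
  have hD : 0 < V₁'' T - V₂'' T := by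
    simp only [negL] at hA₁ hA₂
    have key : r * (V₁ T - V₂ T) ≤ σ ^ 2 / 2 * T ^ 2 * (V₁'' T - V₂'' T) := by
      rw [hd0'] at hA₁
      nlinarith [hA₁, hA₂]
    by_contra hcon
    push_neg at hcon
    have hnp : σ ^ 2 / 2 * T ^ 2 * (V₁'' T - V₂'' T) ≤ 0 :=
      mul_nonpos_of_nonneg_of_nonpos (by positivity) (by linarith)
    nlinarith [mul_pos hr h3]
  have hW'' : HasDerivAt (fun s => V₁' s - V₂' s) (V₁'' T - V₂'' T) T :=
    (hV₁'' T hTpos).sub (hV₂'' T hTpos)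
  have hslope : Tendsto (slope (fun s => V₁' s - V₂' s) T) (𝓝[≠] T) (𝓝 (V₁'' T - V₂'' T)) :=
    hasDerivAt_iff_tendsto_slope.mp hW''
  have hslope' : Tendsto (slope (fun s => V₁' s - V₂' s) T) (𝓝[>] T) (𝓝 (V₁'' T - V₂'' T)) :=
    hslope.mono_left (nhdsWithin_mono _ (fun x hx => ne_of_gt hx))
  have hev1 : ∀ᶠ y in 𝓝[>] T, 0 < V₁' y - V₂' y := by
    filter_upwards [hslope'.eventually_const_lt hD, self_mem_nhdsWithin] with y hy hy'
    have hy'' : 0 < y - T := sub_pos.mpr hy'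
    have hs : slope (fun s => V₁' s - V₂' s) T y
        = ((V₁' y - V₂' y) - (V₁' T - V₂' T)) / (y - T) := by
      simp [slope_def_field]
    rw [hs, hd0, sub_zero] at hy
    have := mul_pos hy hy''
    rwa [div_mul_cancel₀ _ (ne_of_gt hy'')] at this
  have hev : ∀ᶠ y in 𝓝[>] T, (0 < V₁' y - V₂' y) ∧ W y ≤ W T :=
    hev1.and (hloc.filter_mono nhdsWithin_le_nhds)
  obtain ⟨t, ht, htsub⟩ := mem_nhdsGT_iff_exists_Ioo_subset.mp hev
  have ht' : T < t := ht
  set m := (T + t) / 2 with hmdef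
  have hm1 : T < m := by simp only [hmdef]; linarith
  have hm2 : m < t := by simp only [hmdef]; linarith
  have hmono : StrictMonoOn W (Icc T m) := by
    apply strictMonoOn_of_deriv_pos (convex_Icc T m)
    · intro x hx
      have hx0 : 0 < x := lt_of_lt_of_le hTpos hx.1
      exact (((hV₁' x hx0).sub (hV₂' x hx0)).continuousAt).continuousWithinAt
    · intro x hx
      rw [interior_Icc] at hx
      have hx0 : 0 < x := lt_trans hTpos hx.1
      have : deriv W x = V₁' x - V₂' x := ((hV₁' x hx0).sub (hV₂' x hx0)).deriv
      rw [this]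
      exact (htsub ⟨hx.1, lt_trans hx.2 hm2⟩).1
  have hlt : W T < W m :=
    hmono ⟨le_refl T, le_of_lt hm1⟩ ⟨le_of_lt hm1, le_refl m⟩ hm1
  have hle : W m ≤ W T := (htsub ⟨hm1, hm2⟩).2
  linarith

/-- Uniqueness: the perpetual American put variational inequality has at most one positive
twice differentiable solution with `V(S) → E` as `S → 0⁺` and `V(S) → 0` as `S → +∞`. -/
theorem uniqueness_perpetual_put_VI
    (r q σ E : ℝ) (hr : 0 < r) (hq : 0 ≤ q) (hσ : 0 < σ) (hE : 0 < E)
    (V₁ V₁' V₁'' V₂ V₂' V₂'' : ℝ → ℝ)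
    (hV₁' : ∀ S : ℝ, 0 < S → HasDerivAt V₁ (V₁' S) S)
    (hV₁'' : ∀ S : ℝ, 0 < S → HasDerivAt V₁' (V₁'' S) S)
    (hV₂' : ∀ S : ℝ, 0 < S → HasDerivAt V₂ (V₂' S) S)
    (hV₂'' : ∀ S : ℝ, 0 < S → HasDerivAt V₂' (V₂'' S) S)
    (hpos₁ : ∀ S : ℝ, 0 < S → 0 < V₁ S)
    (hpos₂ : ∀ S : ℝ, 0 < S → 0 < V₂ S)
    (hVI₁ : ∀ S : ℝ, 0 < S →
      min (negL r q σ V₁ V₁' V₁'' S) (V₁ S - max (E - S) 0) = 0)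
    (hVI₂ : ∀ S : ℝ, 0 < S →
      min (negL r q σ V₂ V₂' V₂'' S) (V₂ S - max (E - S) 0) = 0)
    (hlim0₁ : Filter.Tendsto V₁ (nhdsWithin 0 (Set.Ioi 0)) (nhds E))
    (hlim0₂ : Filter.Tendsto V₂ (nhdsWithin 0 (Set.Ioi 0)) (nhds E))
    (hlimtop₁ : Filter.Tendsto V₁ Filter.atTop (nhds 0))
    (hlimtop₂ : Filter.Tendsto V₂ Filter.atTop (nhds 0)) :
    ∀ S : ℝ, 0 < S → V₁ S = V₂ S := by
  intro S hS
  exact le_antisymm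
    (perpetual_put_VI_le r q σ E hr hσ V₁ V₁' V₁'' V₂ V₂' V₂'' hV₁' hV₁'' hV₂' hV₂''
      hVI₁ hVI₂ hlim0₁ hlim0₂ hlimtop₁ hlimtop₂ S hS)
    (perpetual_put_VI_le r q σ E hr hσ V₂ V₂' V₂'' V₁ V₁' V₁'' hV₂' hV₂'' hV₁' hV₁''
      hVI₂ hVI₁ hlim0₂ hlim0₁ hlimtop₂ hlimtop₁ S hS)
end

section
/- Let ρ > 1, w > 0 and 0 < a < 1. Then the discriminant D = (ρ+w−1)² − 4·a·(1−a)·w² is strictly positive, and the two roots ξ₁ = ((ρ+w−1) − √D)/(2aw) and ξ₂ = ((ρ+w−1) + √D)/(2aw) of the characteristic equation w·a·ξ² − (ρ+w−1)·ξ + w·(1−a) = 0 satisfy 0 < ξ₁ < 1 < ξ₂. -/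
/-- For `ρ > 1`, `w > 0`, `0 < a < 1`, the discriminant
`D = (ρ+w−1)² − 4a(1−a)w²` of the characteristic equation
`w·a·ξ² − (ρ+w−1)·ξ + w·(1−a) = 0` is strictly positive, and its two roots
`ξ₁ = ((ρ+w−1) − √D)/(2aw)` and `ξ₂ = ((ρ+w−1) + √D)/(2aw)` satisfy `0 < ξ₁ < 1 < ξ₂`. -/
theorem characteristic_roots
    (ρ w a : ℝ) (hρ : 1 < ρ) (hw : 0 < w) (ha0 : 0 < a) (ha1 : a < 1) :
    0 < (ρ + w - 1) ^ 2 - 4 * a * (1 - a) * w ^ 2 ∧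
    (let D := (ρ + w - 1) ^ 2 - 4 * a * (1 - a) * w ^ 2
     let ξ₁ := ((ρ + w - 1) - Real.sqrt D) / (2 * a * w)
     let ξ₂ := ((ρ + w - 1) + Real.sqrt D) / (2 * a * w)
     w * a * ξ₁ ^ 2 - (ρ + w - 1) * ξ₁ + w * (1 - a) = 0 ∧
     w * a * ξ₂ ^ 2 - (ρ + w - 1) * ξ₂ + w * (1 - a) = 0 ∧
     0 < ξ₁ ∧ ξ₁ < 1 ∧ 1 < ξ₂) := by
  set B := ρ + w - 1 with hB
  have hBw : w < B := by simp only [hB]; linarith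
  have hBpos : 0 < B := by linarith
  set D := B ^ 2 - 4 * a * (1 - a) * w ^ 2 with hDdef
  -- D ≥ B² - w² > 0 since 4a(1-a) ≤ 1
  have h4a : 4 * a * (1 - a) ≤ 1 := by nlinarith [sq_nonneg (2 * a - 1)]
  have hD : 0 < D := by
    have : w ^ 2 < B ^ 2 := by nlinarith
    nlinarith [sq_nonneg w]
  have hDltB : D < B ^ 2 := by
    have h1a : (0:ℝ) < 1 - a := by linarith
    have : 0 < 4 * a * (1 - a) * w ^ 2 := by positivity
    simp only [hDdef]; linarith
  have hsq : Real.sqrt D ^ 2 = D := Real.sq_sqrt hD.le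
  have hsnn : 0 ≤ Real.sqrt D := Real.sqrt_nonneg D
  have hsltB : Real.sqrt D < B := by
    rw [show B = Real.sqrt (B ^ 2) from (Real.sqrt_sq hBpos.le).symm]
    exact Real.sqrt_lt_sqrt hD.le hDltB
  -- key squaring inequality: (B - 2aw)² < D
  have hkey : (B - 2 * a * w) ^ 2 < D := by
    simp only [hDdef]
    nlinarith [mul_pos (mul_pos ha0 hw) (sub_pos.mpr hBw)]
  have haw : 0 < 2 * a * w := by positivity
  refine ⟨hD, ?_, ?_, ?_, ?_, ?_⟩
  · field_simp
    nlinarith [hsq]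
  · field_simp
    nlinarith [hsq]
  · apply div_pos _ haw; linarith
  · rw [div_lt_one haw]
    -- B - √D < 2aw ⇔ B - 2aw < √D
    have : B - 2 * a * w < Real.sqrt D := by
      rcases le_or_gt (B - 2 * a * w) 0 with h | h
      · rcases lt_or_eq_of_le h with h' | h'
        · linarith [Real.sqrt_pos.mpr hD]
        · rw [h']; exact Real.sqrt_pos.mpr hD
      · calc B - 2 * a * w = Real.sqrt ((B - 2 * a * w) ^ 2) :=
              (Real.sqrt_sq h.le).symm
          _ < Real.sqrt D := Real.sqrt_lt_sqrt (by positivity) hkey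
    linarith
  · rw [lt_div_iff₀ haw]
    -- 2aw < B + √D
    have h1 : -(B - 2 * a * w) ≤ Real.sqrt D := by
      rcases le_or_gt (-(B - 2 * a * w)) 0 with h | h
      · linarith
      · calc -(B - 2 * a * w) = Real.sqrt ((-(B - 2 * a * w)) ^ 2) :=
              (Real.sqrt_sq h.le).symm
          _ ≤ Real.sqrt D := Real.sqrt_le_sqrt (by nlinarith)
    have : 0 < Real.sqrt D := Real.sqrt_pos.mpr hD
    nlinarith
end

section
/- Suppose (U¹, j₁) and (U², j₂) are both solutions of the perpetual American put explicit difference scheme, and suppose in addition that I_j(φ) > 0 for every j ≤ max(j₁, j₂), where φ is the sequence φ_j = E − e^{jΔx+c} and I_j(φ) = (ρ+w−1)·φ_j − w·(a·φ_{j+1} + (1−a)·φ_{j−1}) (this positivity holds for all sufficiently small Δx). Then j₁ = j₂ and U¹_j = U²_j for all j ∈ ℤ; that is, the solution of the scheme is unique if it exists. -/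
/-- A solution of the perpetual American put explicit difference scheme:
a pair `(U, j*)` with
(a) `U_j = E − e^{jΔx+c}` for `j ≤ j*`;
(b) for `j > j*`, `U_j > (E − e^{jΔx+c})⁺` and
    `ρ·U_j = (1−w)·U_j + w·(a·U_{j+1} + (1−a)·U_{j−1})`;
(c) `E − e^{j*Δx+c} ≥ (1/ρ)·[(1−w)·U_{j*} + w·(a·U_{j*+1} + (1−a)·U_{j*−1})]`;
(d) `U_j → 0` as `j → +∞`. -/
def IsSchemeSolution (E Δx c ρ w a : ℝ) (U : ℤ → ℝ) (jstar : ℤ) : Prop :=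
  (∀ j : ℤ, j ≤ jstar → U j = E - Real.exp ((j : ℝ) * Δx + c)) ∧
  (∀ j : ℤ, jstar < j → max (E - Real.exp ((j : ℝ) * Δx + c)) 0 < U j ∧
    ρ * U j = (1 - w) * U j + w * (a * U (j + 1) + (1 - a) * U (j - 1))) ∧
  (E - Real.exp ((jstar : ℝ) * Δx + c) ≥
    (1 / ρ) * ((1 - w) * U jstar + w * (a * U (jstar + 1) + (1 - a) * U (jstar - 1)))) ∧
  Filter.Tendsto U Filter.atTop (nhds 0)

/-- Discrete maximum principle for the explicit scheme operator. -/
private lemma maxprin (ρ w a : ℝ) (hρ : 1 < ρ) (hw0 : 0 < w) (ha0 : 0 < a) (ha1 : a < 1)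
    (V : ℤ → ℝ) (js : ℤ) (hb : V js ≤ 0)
    (hdec : Filter.Tendsto V Filter.atTop (nhds 0))
    (hrec : ∀ j : ℤ, js < j →
      (ρ + w - 1) * V j ≤ w * (a * V (j + 1) + (1 - a) * V (j - 1))) :
    ∀ j : ℤ, js ≤ j → V j ≤ 0 := by
  intro j hj
  by_contra hpos
  push_neg at hpos
  obtain ⟨N, hN⟩ := Filter.eventually_atTop.mp (hdec.eventually_lt_const hpos)
  have hjmem : j ∈ Finset.Icc js (max N j) := Finset.mem_Icc.mpr ⟨hj, le_max_right _ _⟩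
  obtain ⟨jm, hjmmem, hjmmax⟩ := Finset.exists_max_image (Finset.Icc js (max N j)) V ⟨j, hjmem⟩
  obtain ⟨hjm1, hjm2⟩ := Finset.mem_Icc.mp hjmmem
  have hMpos : 0 < V jm := lt_of_lt_of_le hpos (hjmmax j hjmem)
  have hbound : ∀ i : ℤ, js ≤ i → V i ≤ V jm := by
    intro i hi
    by_cases hiN : i ≤ max N j
    · exact hjmmax i (Finset.mem_Icc.mpr ⟨hi, hiN⟩)
    · push_neg at hiN
      exact (hN i ((le_max_left N j).trans hiN.le)).le.trans (hjmmax j hjmem)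
  have hjs : js < jm := by
    rcases lt_or_eq_of_le hjm1 with h | h
    · exact h
    · exact absurd hMpos (by rw [← h]; exact not_lt.mpr hb)
  have h1 := hrec jm hjs
  have h2 := hbound (jm + 1) (by omega)
  have h3 := hbound (jm - 1) (by omega)
  have hc1 : w * a * V (jm + 1) ≤ w * a * V jm :=
    mul_le_mul_of_nonneg_left h2 (mul_nonneg hw0.le ha0.le)
  have hc2 : w * (1 - a) * V (jm - 1) ≤ w * (1 - a) * V jm :=
    mul_le_mul_of_nonneg_left h3 (mul_nonneg hw0.le (by linarith))
  nlinarith [h1, hc1, hc2, mul_pos (show (0:ℝ) < ρ - 1 by linarith) hMpos]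

/-- If `j₁ ≤ j₂` and both pairs are solutions, then `j₂ ≤ j₁`. -/
private lemma step (E Δx c ρ w a : ℝ) (hρ : 1 < ρ) (hw0 : 0 < w)
    (ha0 : 0 < a) (ha1 : a < 1)
    (U₁ U₂ : ℤ → ℝ) (j₁ j₂ : ℤ) (hle : j₁ ≤ j₂)
    (hφ : ∀ j : ℤ, j ≤ j₂ →
      0 < (ρ + w - 1) * (E - Real.exp ((j : ℝ) * Δx + c)) -
        w * (a * (E - Real.exp (((j : ℝ) + 1) * Δx + c)) +
             (1 - a) * (E - Real.exp (((j : ℝ) - 1) * Δx + c))))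
    (h₁ : IsSchemeSolution E Δx c ρ w a U₁ j₁)
    (h₂ : IsSchemeSolution E Δx c ρ w a U₂ j₂) : j₂ ≤ j₁ := by
  by_contra hlt
  push_neg at hlt
  obtain ⟨ha₁, hb₁, hc₁, hd₁⟩ := h₁
  obtain ⟨ha₂, hb₂, hc₂, hd₂⟩ := h₂
  have hρ0 : (0 : ℝ) < ρ := by linarith
  have key : ∀ j : ℤ, j₁ ≤ j → U₁ j - U₂ j ≤ 0 := by
    apply maxprin ρ w a hρ hw0 ha0 ha1 (fun j => U₁ j - U₂ j) j₁
    · show U₁ j₁ - U₂ j₁ ≤ 0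
      rw [ha₁ j₁ le_rfl, ha₂ j₁ hle]
      simp
    · simpa using hd₁.sub hd₂
    · intro j hj
      show (ρ + w - 1) * (U₁ j - U₂ j) ≤
        w * (a * (U₁ (j + 1) - U₂ (j + 1)) + (1 - a) * (U₁ (j - 1) - U₂ (j - 1)))
      have e₁ := (hb₁ j hj).2
      rcases lt_trichotomy j j₂ with h | h | h
      · have p := hφ j h.le
        have q0 := ha₂ j h.le
        have q1 := ha₂ (j + 1) (by omega)
        have q2 := ha₂ (j - 1) (by omega)
        push_cast at q1 q2
        rw [q0, q1, q2]
        linarith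
      · subst h
        have q0 := ha₂ j le_rfl
        have hA : (1 - w) * U₂ j + w * (a * U₂ (j + 1) + (1 - a) * U₂ (j - 1)) ≤
            ρ * (E - Real.exp ((j : ℝ) * Δx + c)) := by
          have h' := mul_le_mul_of_nonneg_left hc₂ hρ0.le
          calc (1 - w) * U₂ j + w * (a * U₂ (j + 1) + (1 - a) * U₂ (j - 1))
              = ρ * ((1 / ρ) * ((1 - w) * U₂ j +
                  w * (a * U₂ (j + 1) + (1 - a) * U₂ (j - 1)))) := by
                field_simp
            _ ≤ ρ * (E - Real.exp ((j : ℝ) * Δx + c)) := h'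
        rw [q0] at hA ⊢
        linarith
      · have e₂ := (hb₂ j h).2
        linarith
  have hmax := (hb₁ j₂ hlt).1
  have hq := ha₂ j₂ le_rfl
  have := key j₂ hlt.le
  have hle' := le_max_left (E - Real.exp ((j₂ : ℝ) * Δx + c)) 0
  linarith

private lemma eq_on (E Δx c ρ w a : ℝ) (hρ : 1 < ρ) (hw0 : 0 < w)
    (ha0 : 0 < a) (ha1 : a < 1)
    (U₁ U₂ : ℤ → ℝ) (js : ℤ)
    (h₁ : IsSchemeSolution E Δx c ρ w a U₁ js)
    (h₂ : IsSchemeSolution E Δx c ρ w a U₂ js) :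
    ∀ j : ℤ, U₁ j = U₂ j := by
  obtain ⟨ha₁, hb₁, hc₁, hd₁⟩ := h₁
  obtain ⟨ha₂, hb₂, hc₂, hd₂⟩ := h₂
  have k1 : ∀ j : ℤ, js ≤ j → U₁ j - U₂ j ≤ 0 := by
    apply maxprin ρ w a hρ hw0 ha0 ha1 (fun j => U₁ j - U₂ j) js
    · show U₁ js - U₂ js ≤ 0
      rw [ha₁ js le_rfl, ha₂ js le_rfl]; simp
    · simpa using hd₁.sub hd₂
    · intro j hj
      show (ρ + w - 1) * (U₁ j - U₂ j) ≤
        w * (a * (U₁ (j + 1) - U₂ (j + 1)) + (1 - a) * (U₁ (j - 1) - U₂ (j - 1)))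
      have e₁ := (hb₁ j hj).2
      have e₂ := (hb₂ j hj).2
      linarith
  have k2 : ∀ j : ℤ, js ≤ j → U₂ j - U₁ j ≤ 0 := by
    apply maxprin ρ w a hρ hw0 ha0 ha1 (fun j => U₂ j - U₁ j) js
    · show U₂ js - U₁ js ≤ 0
      rw [ha₁ js le_rfl, ha₂ js le_rfl]; simp
    · simpa using hd₂.sub hd₁
    · intro j hj
      show (ρ + w - 1) * (U₂ j - U₁ j) ≤
        w * (a * (U₂ (j + 1) - U₁ (j + 1)) + (1 - a) * (U₂ (j - 1) - U₁ (j - 1)))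
      have e₁ := (hb₁ j hj).2
      have e₂ := (hb₂ j hj).2
      linarith
  intro j
  rcases le_or_gt js j with h | h
  · have := k1 j h; have := k2 j h; linarith
  · rw [ha₁ j h.le, ha₂ j h.le]

/-- Uniqueness of the solution of the perpetual American put explicit difference scheme,
under the positivity `I_j(φ) > 0` of the discrete Black–Scholes operator applied to the
obstacle `φ_j = E − e^{jΔx+c}` for all `j ≤ max(j₁, j₂)` (which holds for all
sufficiently small `Δx`). -/
theorem scheme_solution_unique
    (E Δx c ρ w a : ℝ) (hE : 0 < E) (hΔx : 0 < Δx) (hρ : 1 < ρ)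
    (hw0 : 0 < w) (hw1 : w ≤ 1) (ha0 : 0 < a) (ha1 : a < 1)
    (U₁ U₂ : ℤ → ℝ) (j₁ j₂ : ℤ)
    (hφ : ∀ j : ℤ, j ≤ max j₁ j₂ →
      0 < (ρ + w - 1) * (E - Real.exp ((j : ℝ) * Δx + c)) -
        w * (a * (E - Real.exp (((j : ℝ) + 1) * Δx + c)) +
             (1 - a) * (E - Real.exp (((j : ℝ) - 1) * Δx + c))))
    (h₁ : IsSchemeSolution E Δx c ρ w a U₁ j₁)
    (h₂ : IsSchemeSolution E Δx c ρ w a U₂ j₂) :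
    j₁ = j₂ ∧ ∀ j : ℤ, U₁ j = U₂ j := by
  have heq : j₁ = j₂ := by
    rcases le_total j₁ j₂ with h | h
    · exact le_antisymm h (step E Δx c ρ w a hρ hw0 ha0 ha1 U₁ U₂ j₁ j₂ h
        (fun j hj => hφ j (hj.trans (le_max_right _ _))) h₁ h₂)
    · exact le_antisymm (step E Δx c ρ w a hρ hw0 ha0 ha1 U₂ U₁ j₂ j₁ h
        (fun j hj => hφ j (hj.trans (le_max_left _ _))) h₂ h₁) h
  subst heq
  exact ⟨rfl, eq_on E Δx c ρ w a hρ hw0 ha0 ha1 U₁ U₂ j₁ h₁ h₂⟩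
end

section
/- Let r > 0, q ∈ ℝ, σ > 0, E > 0, c ∈ ℝ. There exists Δx₀ > 0 such that for every 0 < Δx < Δx₀ and every Δt > 0 with w = σ²Δt/Δx² ≤ 1 (so that, setting a = 1/2 + (r−q−σ²/2)·Δx/(2σ²) and ρ = 1 + rΔt, one has 0 < a < 1 and ρ > 1), the perpetual American put explicit difference scheme has a solution (U, j*); moreover the solution is given explicitly by U_j = (E − e^{j*Δx+c})·ξ₁^{j−j*} for j ≥ j* and U_j = E − e^{jΔx+c} for j ≤ j*, where ξ₁ ∈ (0,1) is the smaller root of the characteristic equation w·a·ξ² − (ρ+w−1)·ξ + w·(1−a) = 0. -/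
/-! The characteristic polynomial equals `w (1 - a) > 0` at `0` and `1 - ρ < 0` at `1`, so it has a
root `ξ ∈ (0, 1)`, and `U_j = (E - x) ξ^(j - j*)` with `x = e^(j* Δx + c)` solves the recurrence
and decays. Modulo the characteristic equation, (c) becomes `x (e^Δx - ξ) ≤ E (1 - ξ) e^Δx`,
and the strict bound in (b) becomes `E (1 - ξ) < x (e^Δx - ξ)` (by convexity of
`n ↦ (E - x) ξⁿ + x e^(n Δx)` it suffices to check `n = 1`). Together they confine `x` to an
interval of ratio `e^Δx`, which contains exactly one point of the lattice `e^(j Δx + c)`. -/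

open Filter Real Set

theorem half_add_mul_div_mem_Ioo {b σ Δx : ℝ} (hσ : 0 < σ) (hΔx : 0 < Δx)
    (h : Δx < σ ^ 2 / (|b| + 1)) :
    0 < 1 / 2 + b * Δx / (2 * σ ^ 2) ∧ 1 / 2 + b * Δx / (2 * σ ^ 2) < 1 := by
  have hbΔx : |b| * Δx < σ ^ 2 := by
    have := (lt_div_iff₀ (by positivity)).1 h
    linarith
  have : |b * Δx / (2 * σ ^ 2)| < 1 / 2 := by
    have hσ2 : (0 : ℝ) < 2 * σ ^ 2 := by positivity
    rw [abs_div, abs_mul, abs_of_pos hΔx, abs_of_pos hσ2, div_lt_iff₀ hσ2]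
    linarith
  constructor <;> linarith [abs_lt.1 this]

theorem exists_charPoly_root_mem_Ioo {ρ w a : ℝ} (hρ : 1 < ρ) (hw : 0 < w) (ha : a < 1) :
    ∃ ξ ∈ Ioo (0 : ℝ) 1, w * a * ξ ^ 2 - (ρ + w - 1) * ξ + w * (1 - a) = 0 := by
  have hcont : ContinuousOn (fun ξ : ℝ => w * a * ξ ^ 2 - (ρ + w - 1) * ξ + w * (1 - a))
      (Icc 0 1) := by fun_prop
  have hsign : (0 : ℝ) ∈ Ioo (w * a * 1 ^ 2 - (ρ + w - 1) * 1 + w * (1 - a))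
      (w * a * 0 ^ 2 - (ρ + w - 1) * 0 + w * (1 - a)) :=
    ⟨by linarith, by nlinarith⟩
  exact intermediate_value_Ioo' zero_le_one hcont hsign

theorem exists_exp_mul_add_le_lt {Δx t : ℝ} (hΔx : 0 < Δx) (ht : 0 < t) (c : ℝ) :
    ∃ j : ℤ, exp (j * Δx + c) ≤ t ∧ t < exp (j * Δx + c) * exp Δx := by
  refine ⟨⌊(log t - c) / Δx⌋, ?_, ?_⟩
  · rw [← le_log_iff_exp_le ht]
    have := (le_div_iff₀ hΔx).mp (Int.floor_le ((log t - c) / Δx))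
    linarith
  · rw [← exp_add, ← log_lt_iff_lt_exp ht]
    have := (div_lt_iff₀ hΔx).mp (Int.lt_floor_add_one ((log t - c) / Δx))
    linarith

theorem exists_exercise_index {E Δx ξ : ℝ} (hE : 0 < E) (hΔx : 0 < Δx) (hξ0 : 0 < ξ)
    (hξ1 : ξ < 1) (c : ℝ) :
    ∃ j : ℤ, E * (1 - ξ) < exp (j * Δx + c) * (exp Δx - ξ) ∧
      exp (j * Δx + c) * (exp Δx - ξ) ≤ E * (1 - ξ) * exp Δx := by
  have hy : 1 < exp Δx := one_lt_exp_iff.2 hΔx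
  have hyξ : 0 < exp Δx - ξ := by linarith
  obtain ⟨j, hle, hlt⟩ := exists_exp_mul_add_le_lt hΔx
    (t := E * (1 - ξ) * exp Δx / (exp Δx - ξ)) (by have := sub_pos.2 hξ1; positivity) c
  rw [le_div_iff₀ hyξ] at hle
  rw [div_lt_iff₀ hyξ] at hlt
  refine ⟨j, ?_, hle⟩
  nlinarith [exp_pos Δx]

theorem add_lt_mul_pow_add_mul_pow {K x ξ y : ℝ} (hK : 0 ≤ K) (hx : 0 ≤ x) (hξ0 : 0 ≤ ξ)
    (hξ1 : ξ ≤ 1) (hy : 1 ≤ y) (h1 : K + x < K * ξ + x * y) {n : ℕ} (hn : 1 ≤ n) :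
    K + x < K * ξ ^ n + x * y ^ n := by
  induction n, hn using Nat.le_induction with
  | base => simpa using h1
  | succ n _ ih =>
    -- the increments of `n ↦ K ξⁿ + x yⁿ` are nondecreasing
    have hξn : ξ ^ n ≤ 1 := pow_le_one₀ hξ0 hξ1
    have hyn : 1 ≤ y ^ n := one_le_pow₀ hy
    rw [pow_succ, pow_succ]
    nlinarith [mul_le_mul_of_nonneg_left (sub_nonneg.2 hξ1) (mul_nonneg hK (sub_nonneg.2 hξn)),
      mul_le_mul_of_nonneg_left (sub_nonneg.2 hy) (mul_nonneg hx (sub_nonneg.2 hyn))]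

theorem tendsto_zpow_atTop_nhds_zero_of_lt_one {ξ : ℝ} (hξ0 : -1 < ξ) (hξ1 : ξ < 1) :
    Tendsto (fun n : ℤ => ξ ^ n) atTop (nhds 0) := by
  simpa only [Function.comp_def, rpow_intCast] using
    (tendsto_rpow_atTop_of_base_lt_one ξ hξ0 hξ1).comp tendsto_intCast_atTop_atTop

theorem scheme_recurrence_mul_zpow {ρ w a ξ : ℝ} (hξ : ξ ≠ 0)
    (hchar : w * a * ξ ^ 2 - (ρ + w - 1) * ξ + w * (1 - a) = 0) (K : ℝ) (m : ℤ) :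
    ρ * (K * ξ ^ m) = (1 - w) * (K * ξ ^ m) + w * (a * (K * ξ ^ (m + 1))
      + (1 - a) * (K * ξ ^ (m - 1))) := by
  have hm : ξ ^ m = ξ ^ (m - 1) * ξ := by rw [← zpow_add_one₀ hξ, sub_add_cancel]
  have hm1 : ξ ^ (m + 1) = ξ ^ (m - 1) * ξ ^ 2 := by
    rw [← zpow_natCast, ← zpow_add₀ hξ]; ring_nf
  rw [hm, hm1]
  linear_combination (-(K * ξ ^ (m - 1))) * hchar

theorem continuation_le_payoff {E x y ρ w a ξ : ℝ} (hρ : 0 < ρ) (hw : 0 < w) (ha : a < 1)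
    (hξ : 0 < ξ) (hy : 0 < y) (hchar : w * a * ξ ^ 2 - (ρ + w - 1) * ξ + w * (1 - a) = 0)
    (hx : x * (y - ξ) ≤ E * (1 - ξ) * y) :
    (1 / ρ) * ((1 - w) * (E - x) + w * (a * ((E - x) * ξ) + (1 - a) * (E - x / y))) ≤ E - x := by
  have key : ρ * (E - x) - ((1 - w) * (E - x) + w * (a * ((E - x) * ξ) + (1 - a) * (E - x / y)))
      = w * (1 - a) / (ξ * y) * (E * (1 - ξ) * y - x * (y - ξ)) := by
    field_simp
    linear_combination (-(y * (E - x))) * hchar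
  rw [one_div, inv_mul_le_iff₀ hρ]
  have : 0 ≤ w * (1 - a) / (ξ * y) * (E * (1 - ξ) * y - x * (y - ξ)) :=
    mul_nonneg (by have := sub_pos.2 ha; positivity) (sub_nonneg.2 hx)
  linarith

noncomputable def putSchemeSolution (E Δx c ξ : ℝ) (jstar j : ℤ) : ℝ :=
  if j ≤ jstar then E - exp (j * Δx + c) else (E - exp (jstar * Δx + c)) * ξ ^ (j - jstar)

section

variable {E Δx c ξ : ℝ} {jstar j : ℤ}

theorem putSchemeSolution_of_le (hj : j ≤ jstar) :
    putSchemeSolution E Δx c ξ jstar j = E - exp (j * Δx + c) :=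
  if_pos hj

theorem putSchemeSolution_of_ge (hj : jstar ≤ j) :
    putSchemeSolution E Δx c ξ jstar j = (E - exp (jstar * Δx + c)) * ξ ^ (j - jstar) := by
  rcases hj.eq_or_lt with rfl | hlt
  · simp [putSchemeSolution]
  · exact if_neg hlt.not_ge

theorem exp_add_natCast_mul_add (n : ℕ) :
    exp (((jstar + n : ℤ) : ℝ) * Δx + c) = exp (jstar * Δx + c) * exp Δx ^ n := by
  rw [← exp_nat_mul, ← exp_add]
  push_cast
  ring_nf

theorem isSchemeSolution_putSchemeSolution {ρ w a : ℝ} (hΔx : 0 < Δx) (hρ : 0 < ρ)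
    (hw : 0 < w) (ha : a < 1) (hξ0 : 0 < ξ) (hξ1 : ξ < 1)
    (hchar : w * a * ξ ^ 2 - (ρ + w - 1) * ξ + w * (1 - a) = 0)
    (hlow : E * (1 - ξ) < exp (jstar * Δx + c) * (exp Δx - ξ))
    (hhigh : exp (jstar * Δx + c) * (exp Δx - ξ) ≤ E * (1 - ξ) * exp Δx) :
    IsSchemeSolution E Δx c ρ w a (putSchemeSolution E Δx c ξ jstar) jstar := by
  set x := exp (jstar * Δx + c) with hx_def
  set y := exp Δx with hy_def
  have hx : 0 < x := exp_pos _
  have hy : 1 < y := one_lt_exp_iff.2 hΔx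
  have hK : 0 < E - x := by
    by_contra! hEx
    have h1ξ : 0 ≤ (1 - ξ) * y := by have := sub_pos.2 hξ1; positivity
    nlinarith [mul_le_mul_of_nonneg_right (sub_nonpos.1 hEx) h1ξ,
      mul_pos hx (mul_pos hξ0 (sub_pos.2 hy))]
  refine ⟨fun j hj => putSchemeSolution_of_le hj, fun j hj => ⟨?_, ?_⟩, ?_, ?_⟩
  · obtain ⟨n, rfl⟩ := Int.le.dest hj.le
    have hn : 1 ≤ n := by omega
    rw [putSchemeSolution_of_ge hj.le, exp_add_natCast_mul_add, add_sub_cancel_left, zpow_natCast]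
    refine max_lt ?_ (by positivity)
    have := add_lt_mul_pow_add_mul_pow hK.le hx.le hξ0.le hξ1.le hy.le (by nlinarith) hn
    linarith
  · rw [putSchemeSolution_of_ge hj.le, putSchemeSolution_of_ge (by omega : jstar ≤ j + 1),
      putSchemeSolution_of_ge (by omega : jstar ≤ j - 1), show j + 1 - jstar = j - jstar + 1 by ring,
      show j - 1 - jstar = j - jstar - 1 by ring]
    exact scheme_recurrence_mul_zpow hξ0.ne' hchar _ _
  · have hprev : putSchemeSolution E Δx c ξ jstar (jstar - 1) = E - x / y := by
      rw [putSchemeSolution_of_le (by omega), hx_def, hy_def, ← exp_sub]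
      push_cast
      ring_nf
    rw [putSchemeSolution_of_le le_rfl, putSchemeSolution_of_ge (by omega : jstar ≤ jstar + 1),
      add_sub_cancel_left, zpow_one, hprev]
    exact continuation_le_payoff hρ hw ha hξ0 (by positivity) hchar hhigh
  · have := ((tendsto_zpow_atTop_nhds_zero_of_lt_one (by linarith) hξ1).comp
      (tendsto_atTop_add_const_right _ (-jstar) tendsto_id)).const_mul (E - x)
    rw [mul_zero] at this
    refine this.congr' ?_
    filter_upwards [eventually_ge_atTop jstar] with j hj
    rw [putSchemeSolution_of_ge hj]
    rfl

end

/-- Existence and explicit representation of the solution of the explicit difference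
scheme for the perpetual American put price: for all sufficiently small `Δx` and any
`Δt > 0` with `w = σ²Δt/Δx² ≤ 1` (so that `0 < a < 1` and `ρ > 1`), a solution `(U, j*)`
exists, given by `U_j = (E − e^{j*Δx+c})·ξ₁^{j−j*}` for `j ≥ j*` and `U_j = E − e^{jΔx+c}`
for `j ≤ j*`, where `ξ₁ ∈ (0,1)` is the smaller root of the characteristic equation. -/
theorem scheme_solution_exists
    (r q σ E c : ℝ) (hr : 0 < r) (hσ : 0 < σ) (hE : 0 < E) :
    ∃ Δx₀ : ℝ, 0 < Δx₀ ∧ ∀ Δx : ℝ, 0 < Δx → Δx < Δx₀ → ∀ Δt : ℝ, 0 < Δt →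
      σ ^ 2 * Δt / Δx ^ 2 ≤ 1 →
      (0 < 1 / 2 + (r - q - σ ^ 2 / 2) * Δx / (2 * σ ^ 2) ∧
        1 / 2 + (r - q - σ ^ 2 / 2) * Δx / (2 * σ ^ 2) < 1 ∧
        1 < 1 + r * Δt) ∧
      ∃ (U : ℤ → ℝ) (jstar : ℤ) (ξ₁ : ℝ),
        0 < ξ₁ ∧ ξ₁ < 1 ∧
        (σ ^ 2 * Δt / Δx ^ 2) * (1 / 2 + (r - q - σ ^ 2 / 2) * Δx / (2 * σ ^ 2)) * ξ₁ ^ 2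
          - ((1 + r * Δt) + σ ^ 2 * Δt / Δx ^ 2 - 1) * ξ₁
          + (σ ^ 2 * Δt / Δx ^ 2) *
              (1 - (1 / 2 + (r - q - σ ^ 2 / 2) * Δx / (2 * σ ^ 2))) = 0 ∧
        IsSchemeSolution E Δx c (1 + r * Δt) (σ ^ 2 * Δt / Δx ^ 2)
          (1 / 2 + (r - q - σ ^ 2 / 2) * Δx / (2 * σ ^ 2)) U jstar ∧
        (∀ j : ℤ, jstar ≤ j →
          U j = (E - Real.exp ((jstar : ℝ) * Δx + c)) * ξ₁ ^ (j - jstar)) ∧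
        (∀ j : ℤ, j ≤ jstar → U j = E - Real.exp ((j : ℝ) * Δx + c)) := by
  refine ⟨σ ^ 2 / (|r - q - σ ^ 2 / 2| + 1), by positivity, fun Δx hΔx hΔx₀ Δt hΔt _ => ?_⟩
  obtain ⟨ha0, ha1⟩ := half_add_mul_div_mem_Ioo hσ hΔx hΔx₀
  have hρ : 1 < 1 + r * Δt := lt_add_of_pos_right 1 (mul_pos hr hΔt)
  have hw : 0 < σ ^ 2 * Δt / Δx ^ 2 := by positivity
  obtain ⟨ξ, ⟨hξ0, hξ1⟩, hchar⟩ := exists_charPoly_root_mem_Ioo hρ hw ha1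
  obtain ⟨jstar, hlow, hhigh⟩ := exists_exercise_index hE hΔx hξ0 hξ1 c
  exact ⟨⟨ha0, ha1, hρ⟩, putSchemeSolution E Δx c ξ jstar, jstar, ξ, hξ0, hξ1, hchar,
    isSchemeSolution_putSchemeSolution hΔx (by linarith) hw ha1 hξ0 hξ1 hchar hlow hhigh,
    fun _ => putSchemeSolution_of_ge, fun _ => putSchemeSolution_of_le⟩
end

section
/- Let ρ > 1, 0 ≤ θ ≤ 1 and let φ : ℤ → ℝ be bounded. Suppose (U^n)_{n≥0} is a family of sequences U^n : ℤ → ℝ that is uniformly bounded (sup_{n,j} |U^n_j| < ∞) and satisfies U^n = B(U^{n+1}) for every n ≥ 0. Then U^n is independent of n, i.e. U^n = U^0 for all n, and U^0 is the unique fixed point of B: U^0_j = max{ (1/ρ)·(θ·U^0_{j+1} + (1−θ)·U^0_{j−1}), φ_j } for all j ∈ ℤ. In particular, the limit as maturity tends to infinity of the binomial-tree price of an American put option does not depend on time. -/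
/-- The one-step binomial-tree (BTM) operator
`(B U)_j = max{ (1/ρ)·(θ·U_{j+1} + (1−θ)·U_{j−1}), φ_j }`. -/
noncomputable def Bop (ρ θ : ℝ) (φ : ℤ → ℝ) (U : ℤ → ℝ) : ℤ → ℝ :=
  fun j => max ((1 / ρ) * (θ * U (j + 1) + (1 - θ) * U (j - 1))) (φ j)

/-- Pointwise contraction estimate for the BTM operator. -/
lemma Bop_contract (ρ θ : ℝ) (hρ : 1 < ρ) (hθ0 : 0 ≤ θ) (hθ1 : θ ≤ 1)
    (φ : ℤ → ℝ) (V W : ℤ → ℝ) (C : ℝ) (hC : ∀ j, |V j - W j| ≤ C) :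
    ∀ j, |Bop ρ θ φ V j - Bop ρ θ φ W j| ≤ (1 / ρ) * C := by
  intro j
  have hρ0 : (0:ℝ) < ρ := lt_trans one_pos hρ
  have hρinv : (0:ℝ) ≤ 1 / ρ := by positivity
  have h1 : |Bop ρ θ φ V j - Bop ρ θ φ W j| ≤
      |(1 / ρ) * (θ * V (j + 1) + (1 - θ) * V (j - 1)) -
       (1 / ρ) * (θ * W (j + 1) + (1 - θ) * W (j - 1))| :=
    abs_max_sub_max_le_abs _ _ _
  have e : (1 / ρ) * (θ * V (j + 1) + (1 - θ) * V (j - 1)) -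
      (1 / ρ) * (θ * W (j + 1) + (1 - θ) * W (j - 1))
      = (1 / ρ) * (θ * (V (j + 1) - W (j + 1)) + (1 - θ) * (V (j - 1) - W (j - 1))) := by
    ring
  rw [e] at h1
  refine h1.trans ?_
  rw [abs_mul, abs_of_nonneg hρinv]
  apply mul_le_mul_of_nonneg_left _ hρinv
  calc |θ * (V (j + 1) - W (j + 1)) + (1 - θ) * (V (j - 1) - W (j - 1))|
      ≤ |θ * (V (j + 1) - W (j + 1))| + |(1 - θ) * (V (j - 1) - W (j - 1))| := abs_add_le _ _
    _ = θ * |V (j + 1) - W (j + 1)| + (1 - θ) * |V (j - 1) - W (j - 1)| := by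
        rw [abs_mul, abs_mul, abs_of_nonneg hθ0, abs_of_nonneg (by linarith : (0:ℝ) ≤ 1 - θ)]
    _ ≤ θ * C + (1 - θ) * C := by
        have := hC (j + 1); have := hC (j - 1)
        gcongr <;> linarith
    _ = C := by ring

/-- A uniformly bounded family `(Uⁿ)` with `Uⁿ = B(Uⁿ⁺¹)` is independent of `n`, and `U⁰`
is the unique bounded fixed point of `B`: the limit as maturity tends to infinity of the
BTM price of an American put option does not depend on time. -/
theorem Bop_limit_time_independent
    (ρ θ : ℝ) (hρ : 1 < ρ) (hθ0 : 0 ≤ θ) (hθ1 : θ ≤ 1)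
    (φ : ℤ → ℝ) (hφ : ∃ M, ∀ j : ℤ, |φ j| ≤ M)
    (U : ℕ → ℤ → ℝ) (hbdd : ∃ M, ∀ (n : ℕ) (j : ℤ), |U n j| ≤ M)
    (hrec : ∀ n : ℕ, U n = Bop ρ θ φ (U (n + 1))) :
    (∀ n : ℕ, U n = U 0) ∧
    (∀ j : ℤ, U 0 j = max ((1 / ρ) * (θ * U 0 (j + 1) + (1 - θ) * U 0 (j - 1))) (φ j)) ∧
    (∀ W : ℤ → ℝ, (∃ M, ∀ j : ℤ, |W j| ≤ M) → Bop ρ θ φ W = W → W = U 0) := by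
  obtain ⟨M, hM⟩ := hbdd
  have hρ0 : (0:ℝ) < ρ := lt_trans one_pos hρ
  have hlt : (1:ℝ) / ρ < 1 := by
    rw [div_lt_one hρ0]; exact hρ
  have hge : (0:ℝ) ≤ 1 / ρ := by positivity
  have htend : Filter.Tendsto (fun k : ℕ => (1 / ρ) ^ k) Filter.atTop (nhds 0) :=
    tendsto_pow_atTop_nhds_zero_of_lt_one hge hlt
  -- key estimate: |U n - U (n+1)| ≤ (1/ρ)^k · 2M for all k
  have key : ∀ (k n : ℕ) (j : ℤ), |U n j - U (n + 1) j| ≤ (1 / ρ) ^ k * (2 * M) := by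
    intro k
    induction k with
    | zero =>
      intro n j
      have h1 := hM n j
      have h2 := hM (n + 1) j
      have := abs_sub (U n j) (U (n + 1) j)
      simp only [pow_zero, one_mul]
      calc |U n j - U (n + 1) j| ≤ |U n j| + |U (n + 1) j| := abs_sub _ _
        _ ≤ 2 * M := by linarith
    | succ k ih =>
      intro n j
      have h := Bop_contract ρ θ hρ hθ0 hθ1 φ (U (n + 1)) (U (n + 2)) ((1 / ρ) ^ k * (2 * M))
        (ih (n + 1)) j
      have e1 : U n j = Bop ρ θ φ (U (n + 1)) j := by rw [hrec n]
      have e2 : U (n + 1) j = Bop ρ θ φ (U (n + 2)) j := by rw [hrec (n + 1)]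
      rw [e1, e2]
      calc |Bop ρ θ φ (U (n + 1)) j - Bop ρ θ φ (U (n + 2)) j|
          ≤ (1 / ρ) * ((1 / ρ) ^ k * (2 * M)) := h
        _ = (1 / ρ) ^ (k + 1) * (2 * M) := by ring
  have hzero : ∀ (n : ℕ), U n = U (n + 1) := by
    intro n
    funext j
    have htend2 : Filter.Tendsto (fun k : ℕ => (1 / ρ) ^ k * (2 * M)) Filter.atTop (nhds 0) := by
      simpa using htend.mul_const (2 * M)
    have hle : |U n j - U (n + 1) j| ≤ 0 :=
      ge_of_tendsto' htend2 (fun k => key k n j)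
    have := abs_nonneg (U n j - U (n + 1) j)
    have : |U n j - U (n + 1) j| = 0 := le_antisymm hle this
    have := abs_eq_zero.mp this
    linarith [sub_eq_zero.mp this, le_refl (U n j)]
  have hconst : ∀ n : ℕ, U n = U 0 := by
    intro n
    induction n with
    | zero => rfl
    | succ n ih => rw [← hzero n, ih]
  have hfix : Bop ρ θ φ (U 0) = U 0 := by
    conv_rhs => rw [hrec 0]
    rw [← hconst 1]
  refine ⟨hconst, ?_, ?_⟩
  · intro j
    conv_lhs => rw [← hfix]
    rfl
  · intro W ⟨MW, hMW⟩ hWfix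
    funext j
    have key2 : ∀ (k : ℕ) (j : ℤ), |W j - U 0 j| ≤ (1 / ρ) ^ k * (MW + M) := by
      intro k
      induction k with
      | zero =>
        intro j
        simp only [pow_zero, one_mul]
        calc |W j - U 0 j| ≤ |W j| + |U 0 j| := abs_sub _ _
          _ ≤ MW + M := add_le_add (hMW j) (hM 0 j)
      | succ k ih =>
        intro j
        have h := Bop_contract ρ θ hρ hθ0 hθ1 φ W (U 0) ((1 / ρ) ^ k * (MW + M)) ih j
        rw [← hWfix]
        conv_lhs => rw [show U 0 = Bop ρ θ φ (U 0) from hfix.symm]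
        calc |Bop ρ θ φ W j - Bop ρ θ φ (U 0) j|
            ≤ (1 / ρ) * ((1 / ρ) ^ k * (MW + M)) := h
          _ = (1 / ρ) ^ (k + 1) * (MW + M) := by ring
    have htend2 : Filter.Tendsto (fun k : ℕ => (1 / ρ) ^ k * (MW + M)) Filter.atTop (nhds 0) := by
      simpa using htend.mul_const (MW + M)
    have hle : |W j - U 0 j| ≤ 0 := ge_of_tendsto' htend2 (fun k => key2 k j)
    have h0 : |W j - U 0 j| = 0 := le_antisymm hle (abs_nonneg _)
    exact sub_eq_zero.mp (abs_eq_zero.mp h0)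
end

section
/- Let ρ ≥ 1, 0 ≤ w ≤ 1, 0 ≤ a ≤ 1 and φ : ℤ → ℝ. Then the iterates of F starting from φ are pointwise nondecreasing: for every m ≥ 0 and every j ∈ ℤ, (F^m φ)_j ≤ (F^{m+1} φ)_j. Consequently, the price of an American option computed by the explicit difference scheme, which at time step n with maturity after N steps equals (F^{N−n} φ)_j, is nondecreasing in the maturity N for each fixed n and j. -/
/-- The explicit-difference-scheme operator
`(F U)_j = max{ (1/ρ)·[(1−w)·U_j + w·(a·U_{j+1} + (1−a)·U_{j−1})], φ_j }`. -/
noncomputable def Fop (ρ w a : ℝ) (φ : ℤ → ℝ) (U : ℤ → ℝ) : ℤ → ℝ :=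
  fun j => max ((1 / ρ) * ((1 - w) * U j + w * (a * U (j + 1) + (1 - a) * U (j - 1)))) (φ j)

lemma Fop_mono (ρ w a : ℝ) (hρ : 1 ≤ ρ) (hw0 : 0 ≤ w) (hw1 : w ≤ 1) (ha0 : 0 ≤ a)
    (ha1 : a ≤ 1) (φ U V : ℤ → ℝ) (h : ∀ j, U j ≤ V j) :
    ∀ j, Fop ρ w a φ U j ≤ Fop ρ w a φ V j := by
  intro j
  apply max_le_max _ le_rfl
  have hρ0 : (0:ℝ) ≤ 1 / ρ := by positivity
  gcongr <;> first | exact h _ | linarith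

/-- The iterates of `F` starting from the obstacle `φ` are pointwise nondecreasing;
consequently the explicit-difference-scheme price `(F^{N−n} φ)_j` of an American option is
nondecreasing in the maturity `N` for fixed `n` and `j`. -/
theorem Fop_iterates_monotone
    (ρ w a : ℝ) (hρ : 1 ≤ ρ) (hw0 : 0 ≤ w) (hw1 : w ≤ 1) (ha0 : 0 ≤ a) (ha1 : a ≤ 1)
    (φ : ℤ → ℝ) :
    ∀ (m : ℕ) (j : ℤ), (Fop ρ w a φ)^[m] φ j ≤ (Fop ρ w a φ)^[m + 1] φ j := by
  intro m
  induction m with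
  | zero =>
    intro j
    simp only [Function.iterate_succ_apply, Function.iterate_zero_apply]
    exact le_max_right _ (φ j)
  | succ n ih =>
    intro j
    have := Fop_mono ρ w a hρ hw0 hw1 ha0 ha1 φ _ _ ih j
    simpa [Function.iterate_succ_apply'] using this
end

section
/- Let ρ > 1, 0 ≤ w ≤ 1, 0 ≤ a ≤ 1 and let φ : ℤ → ℝ be bounded. Then F maps the space l∞(ℤ) of bounded two-sided real sequences (with supremum norm ‖U‖ = sup_{j∈ℤ} |U_j|) into itself and is a contraction with ‖F U − F V‖ ≤ (1/ρ)·‖U − V‖ for all bounded U, V; hence F has a unique fixed point in l∞(ℤ). Moreover, if (W^n)_{n≥0} is a uniformly bounded family of sequences with W^n = F(W^{n+1}) for all n ≥ 0, then W^n = W^0 for all n and W^0 is that unique fixed point; in particular the limit as maturity tends to infinity of the explicit-difference-scheme price of an American put option does not depend on time. -/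
open Set BoundedContinuousFunction

lemma abs_convex_comb_le {w a x y z K : ℝ} (hw0 : 0 ≤ w) (hw1 : w ≤ 1) (ha0 : 0 ≤ a)
    (ha1 : a ≤ 1) (hx : |x| ≤ K) (hy : |y| ≤ K) (hz : |z| ≤ K) :
    |(1 - w) * x + w * (a * y + (1 - a) * z)| ≤ K := by
  have hwa : 0 ≤ w * a := mul_nonneg hw0 ha0
  have hwa' : 0 ≤ w * (1 - a) := mul_nonneg hw0 (sub_nonneg.mpr ha1)
  rw [abs_le] at hx hy hz ⊢
  constructor <;> nlinarith

lemma bddAbove_range_abs_sub {ι : Type*} {f g : ι → ℝ} {M N : ℝ} (hf : ∀ i, |f i| ≤ M)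
    (hg : ∀ i, |g i| ≤ N) : BddAbove (range fun i => |f i - g i|) :=
  ⟨M + N, by rintro _ ⟨i, rfl⟩; exact (abs_sub _ _).trans (add_le_add (hf i) (hg i))⟩

lemma nonpos_of_forall_le_imp_le_mul {ι : Type*} {d : ι → ℝ} {c : ℝ} (hc : c < 1)
    (hd : BddAbove (range d)) (h : ∀ K, (∀ i, d i ≤ K) → ∀ i, d i ≤ c * K) (i : ι) :
    d i ≤ 0 := by
  have : Nonempty ι := ⟨i⟩
  have hle_sup : ∀ i, d i ≤ ⨆ i, d i := le_ciSup hd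
  have hsup : ⨆ i, d i ≤ c * ⨆ i, d i := ciSup_le (h _ hle_sup)
  nlinarith [hle_sup i]

section Fop

variable {ρ w a : ℝ} {φ : ℤ → ℝ}

lemma abs_Fop_sub_le (hρ : 0 ≤ ρ) (hw0 : 0 ≤ w) (hw1 : w ≤ 1) (ha0 : 0 ≤ a) (ha1 : a ≤ 1)
    {U V : ℤ → ℝ} {K : ℝ} (hK : ∀ j, |U j - V j| ≤ K) (j : ℤ) :
    |Fop ρ w a φ U j - Fop ρ w a φ V j| ≤ (1 / ρ) * K := by
  refine (abs_max_sub_max_le_abs _ _ _).trans ?_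
  rw [← mul_sub, abs_mul, abs_of_nonneg (one_div_nonneg.mpr hρ)]
  gcongr
  refine le_of_eq_of_le (congrArg abs ?_)
    (abs_convex_comb_le hw0 hw1 ha0 ha1 (hK j) (hK (j + 1)) (hK (j - 1)))
  ring

lemma abs_Fop_le (hρ : 0 ≤ ρ) (hw0 : 0 ≤ w) (hw1 : w ≤ 1) (ha0 : 0 ≤ a) (ha1 : a ≤ 1)
    {U : ℤ → ℝ} {M N : ℝ} (hU : ∀ j, |U j| ≤ M) (hφ : ∀ j, |φ j| ≤ N) (j : ℤ) :
    |Fop ρ w a φ U j| ≤ (1 / ρ) * M + N := by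
  have hFop_zero : |Fop ρ w a φ 0 j| ≤ N := by
    simp only [Fop, Pi.zero_apply, mul_zero, add_zero]
    exact abs_max_le_max_abs_abs.trans (max_le (by simpa using (abs_nonneg _).trans (hφ j)) (hφ j))
  have hdiff := abs_Fop_sub_le (φ := φ) hρ hw0 hw1 ha0 ha1 (V := 0) (by simpa using hU) j
  linarith [abs_sub_abs_le_abs_sub (Fop ρ w a φ U j) (Fop ρ w a φ 0 j)]

lemma iSup_abs_Fop_sub_le (hρ : 0 ≤ ρ) (hw0 : 0 ≤ w) (hw1 : w ≤ 1) (ha0 : 0 ≤ a)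
    (ha1 : a ≤ 1) {U V : ℤ → ℝ} (hUV : BddAbove (range fun j => |U j - V j|)) :
    ⨆ j, |Fop ρ w a φ U j - Fop ρ w a φ V j| ≤ (1 / ρ) * ⨆ j, |U j - V j| :=
  Real.iSup_le (abs_Fop_sub_le hρ hw0 hw1 ha0 ha1 (le_ciSup hUV))
    (mul_nonneg (one_div_nonneg.mpr hρ) (Real.iSup_nonneg fun _ => abs_nonneg _))

lemma exists_bounded_fixedPoint_Fop (hρ : 1 < ρ) (hw0 : 0 ≤ w) (hw1 : w ≤ 1) (ha0 : 0 ≤ a)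
    (ha1 : a ≤ 1) {N : ℝ} (hφ : ∀ j, |φ j| ≤ N) :
    ∃ U : ℤ → ℝ, (∃ M, ∀ j, |U j| ≤ M) ∧ Fop ρ w a φ U = U := by
  have hρ0 : 0 ≤ ρ := zero_le_one.trans hρ.le
  let G : (ℤ →ᵇ ℝ) → (ℤ →ᵇ ℝ) := fun f => ofNormedAddCommGroupDiscrete (Fop ρ w a φ f)
    ((1 / ρ) * ‖f‖ + N) (abs_Fop_le hρ0 hw0 hw1 ha0 ha1 f.norm_coe_le_norm hφ)
  have hG : ContractingWith (1 / ρ).toNNReal G := by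
    refine ⟨by simpa using inv_lt_one_of_one_lt₀ hρ, LipschitzWith.of_dist_le_mul fun f g => ?_⟩
    rw [Real.coe_toNNReal _ (one_div_nonneg.mpr hρ0)]
    refine (dist_le (by positivity)).mpr fun j => ?_
    exact abs_Fop_sub_le hρ0 hw0 hw1 ha0 ha1 (dist_coe_le_dist (f := f) (g := g)) j
  obtain ⟨U, hU, -⟩ := hG.exists_fixedPoint 0 (edist_ne_top _ _)
  exact ⟨U, ⟨‖U‖, U.norm_coe_le_norm⟩, congrArg DFunLike.coe hU⟩

lemma eq_of_Fop_eq_self (hρ : 1 < ρ) (hw0 : 0 ≤ w) (hw1 : w ≤ 1) (ha0 : 0 ≤ a) (ha1 : a ≤ 1)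
    {U V : ℤ → ℝ} {M N : ℝ} (hU : ∀ j, |U j| ≤ M) (hV : ∀ j, |V j| ≤ N)
    (hFU : Fop ρ w a φ U = U) (hFV : Fop ρ w a φ V = V) : U = V := by
  have hdist : ∀ j, |U j - V j| ≤ 0 := by
    refine nonpos_of_forall_le_imp_le_mul ((div_lt_one (zero_lt_one.trans hρ)).mpr hρ)
      (bddAbove_range_abs_sub hU hV) fun K hK j => ?_
    rw [← hFU, ← hFV]
    exact abs_Fop_sub_le (zero_le_one.trans hρ.le) hw0 hw1 ha0 ha1 hK j
  exact funext fun j => sub_eq_zero.mp (abs_nonpos_iff.mp (hdist j))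

lemma eq_of_eq_Fop_succ (hρ : 1 < ρ) (hw0 : 0 ≤ w) (hw1 : w ≤ 1) (ha0 : 0 ≤ a) (ha1 : a ≤ 1)
    {W : ℕ → ℤ → ℝ} {M : ℝ} (hW : ∀ n j, |W n j| ≤ M) (hrec : ∀ n, W n = Fop ρ w a φ (W (n + 1)))
    (n m : ℕ) : W n = W m := by
  have hdist : ∀ p : ℕ × ℕ × ℤ, |W p.1 p.2.2 - W p.2.1 p.2.2| ≤ 0 := by
    refine nonpos_of_forall_le_imp_le_mul ((div_lt_one (zero_lt_one.trans hρ)).mpr hρ)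
      (bddAbove_range_abs_sub (fun p => hW _ _) (fun p => hW _ _)) fun K hK ⟨n, m, j⟩ => ?_
    rw [hrec n, hrec m]
    exact abs_Fop_sub_le (zero_le_one.trans hρ.le) hw0 hw1 ha0 ha1
      (fun j => hK (n + 1, m + 1, j)) j
  exact funext fun j => sub_eq_zero.mp (abs_nonpos_iff.mp (hdist (n, m, j)))

end Fop

/-- For `ρ > 1`, `0 ≤ w ≤ 1`, `0 ≤ a ≤ 1` and bounded obstacle `φ`: `F` maps `l∞(ℤ)` into
itself, is a contraction with `‖F U − F V‖ ≤ (1/ρ)·‖U − V‖`, hence has a unique fixed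
point in `l∞(ℤ)`; moreover any uniformly bounded family `(Wⁿ)` with `Wⁿ = F(Wⁿ⁺¹)` is
independent of `n` and `W⁰` is that fixed point: the limit as maturity tends to infinity
of the explicit-difference-scheme price of an American put option does not depend on
time. -/
theorem Fop_contraction_and_time_independence
    (ρ w a : ℝ) (hρ : 1 < ρ) (hw0 : 0 ≤ w) (hw1 : w ≤ 1) (ha0 : 0 ≤ a) (ha1 : a ≤ 1)
    (φ : ℤ → ℝ) (hφ : ∃ M, ∀ j : ℤ, |φ j| ≤ M) :
    (∀ U : ℤ → ℝ, (∃ M, ∀ j : ℤ, |U j| ≤ M) →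
      ∃ M, ∀ j : ℤ, |Fop ρ w a φ U j| ≤ M) ∧
    (∀ U V : ℤ → ℝ, (∃ M, ∀ j : ℤ, |U j| ≤ M) → (∃ M, ∀ j : ℤ, |V j| ≤ M) →
      (⨆ j : ℤ, |Fop ρ w a φ U j - Fop ρ w a φ V j|) ≤
        (1 / ρ) * ⨆ j : ℤ, |U j - V j|) ∧
    (∃! U : ℤ → ℝ, (∃ M, ∀ j : ℤ, |U j| ≤ M) ∧ Fop ρ w a φ U = U) ∧
    (∀ W : ℕ → ℤ → ℝ, (∃ M, ∀ (n : ℕ) (j : ℤ), |W n j| ≤ M) →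
      (∀ n : ℕ, W n = Fop ρ w a φ (W (n + 1))) →
      (∀ n : ℕ, W n = W 0) ∧ Fop ρ w a φ (W 0) = W 0) := by
  obtain ⟨N, hφ⟩ := hφ
  have hρ0 : 0 ≤ ρ := zero_le_one.trans hρ.le
  refine ⟨fun U ⟨M, hU⟩ => ⟨_, abs_Fop_le hρ0 hw0 hw1 ha0 ha1 hU hφ⟩,
    fun U V ⟨M, hU⟩ ⟨M', hV⟩ => iSup_abs_Fop_sub_le hρ0 hw0 hw1 ha0 ha1
      (bddAbove_range_abs_sub hU hV), ?_, ?_⟩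
  · obtain ⟨U, ⟨M, hU⟩, hFU⟩ := exists_bounded_fixedPoint_Fop hρ hw0 hw1 ha0 ha1 hφ
    exact ⟨U, ⟨⟨M, hU⟩, hFU⟩, fun V ⟨⟨M', hV⟩, hFV⟩ =>
      eq_of_Fop_eq_self hρ hw0 hw1 ha0 ha1 hV hU hFV hFU⟩
  · intro W ⟨M, hW⟩ hrec
    have hconst := eq_of_eq_Fop_succ hρ hw0 hw1 ha0 ha1 hW hrec
    exact ⟨fun n => hconst n 0, by simpa only [hconst 1 0] using (hrec 0).symm⟩
end
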